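/- The origami monoid O_n is aperiodic: for every w ∈ O_n there exists a positive integer m such that w^m = w^{m-1}. Consequently, O_n is H-trivial (Green's H relation is the equality relation). -/
import Mathlib


namespace Origami

/-- Generators of the origami monoid: a type bit (`true` for α, `false` for β)
and an index in `Fin (n-1)` (so indices `1,…,n-1` are represented by `0,…,n-2`). -/
inductive Gen (n : ℕ) : Type
  | mk (t : Bool) (i : Fin (n - 1))
deriving DecidableEq

/-- Words over the generators. -/
abbrev W (n : ℕ) := FreeMonoid (Gen n)

/-- The word consisting of the single generator of type `t` and index `i`. -/
def go {n : ℕ} (t : Bool) (i : Fin (n - 1)) : W n := FreeMonoid.of (Gen.mk t i)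

/-- `|i - j| = 1`. -/
def adj {n : ℕ} (i j : Fin (n - 1)) : Prop := i.val + 1 = j.val ∨ j.val + 1 = i.val

/-- `|i - j| ≥ 2`. -/
def far {n : ℕ} (i j : Fin (n - 1)) : Prop := i.val + 2 ≤ j.val ∨ j.val + 2 ≤ i.val

/-- The defining relations (1)–(5), (1a), (2a), (3a) of the origami monoid. -/
inductive Rel (n : ℕ) : W n → W n → Prop
  | idem (t : Bool) (i : Fin (n - 1)) : Rel n (go t i * go t i) (go t i)
  | jones (t : Bool) (i j : Fin (n - 1)) (h : adj i j) :
      Rel n (go t i * go t j * go t i) (go t i)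
  | inter (t : Bool) (i j : Fin (n - 1)) (h : i ≠ j) :
      Rel n (go t i * go (!t) j) (go (!t) j * go t i)
  | intra (t : Bool) (i j : Fin (n - 1)) (h : far i j) :
      Rel n (go t i * go t j) (go t j * go t i)
  | idemA (t : Bool) (i : Fin (n - 1)) :
      Rel n (go t i * go (!t) i * (go t i * go (!t) i)) (go t i * go (!t) i)
  | jonesA (t : Bool) (i j : Fin (n - 1)) (h : adj i j) :
      Rel n (go t i * go (!t) i * (go t j * go (!t) j) * (go t i * go (!t) i))
            (go t i * go (!t) i)

/-- The congruence generated by the origami relations. -/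
def oriCon (n : ℕ) : Con (W n) := conGen (Rel n)

/-- The origami monoid `O_n`. -/
abbrev O (n : ℕ) := (oriCon n).Quotient

/-- The image of a generator in `O_n`. -/
def gen {n : ℕ} (t : Bool) (i : Fin (n - 1)) : O n := (oriCon n).mk' (go t i)

/-- The generator `α_i`. -/
def genA {n : ℕ} (i : Fin (n - 1)) : O n := gen true i

/-- The generator `β_i`. -/
def genB {n : ℕ} (i : Fin (n - 1)) : O n := gen false i

end Origami

/-- Green's `L` relation: `a L b` iff `Ma = Mb`. -/
def GreenL {M : Type*} [Monoid M] (a b : M) : Prop :=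
  Set.range (fun x : M => x * a) = Set.range (fun x : M => x * b)

/-- Green's `R` relation: `a R b` iff `aM = bM`. -/
def GreenR {M : Type*} [Monoid M] (a b : M) : Prop :=
  Set.range (fun x : M => a * x) = Set.range (fun x : M => b * x)

/-- Green's `D` relation: `a D b` iff there is `c` with `a L c` and `c R b`. -/
def GreenD {M : Type*} [Monoid M] (a b : M) : Prop :=
  ∃ c : M, GreenL a c ∧ GreenR c b

namespace OriProof
open Origami

variable {n : ℕ}

theorem rel_eq {u v : W n} (h : Rel n u v) : (oriCon n).mk' u = (oriCon n).mk' v :=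
  (Con.eq _).2 (ConGen.Rel.of _ _ h)

/-- `Aq n k`, `Bq n k` : the generators as total functions of a natural index. -/
def Aq (n : ℕ) (k : ℕ) : O n := if h : k < n - 1 then gen true ⟨k, h⟩ else 1
def Bq (n : ℕ) (k : ℕ) : O n := if h : k < n - 1 then gen false ⟨k, h⟩ else 1

theorem e_idem (t : Bool) (i : Fin (n-1)) : gen t i * gen t i = gen t i := by
  simpa [gen, map_mul] using rel_eq (Rel.idem t i)

theorem e_jones (t : Bool) (i j : Fin (n-1)) (h : adj i j) :
    gen t i * gen t j * gen t i = gen t i := by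
  simpa [gen, map_mul] using rel_eq (Rel.jones t i j h)

theorem e_inter (t : Bool) (i j : Fin (n-1)) (h : i ≠ j) :
    gen t i * gen (!t) j = gen (!t) j * gen t i := by
  simpa [gen, map_mul] using rel_eq (Rel.inter t i j h)

theorem e_intra (t : Bool) (i j : Fin (n-1)) (h : far i j) :
    gen t i * gen t j = gen t j * gen t i := by
  simpa [gen, map_mul] using rel_eq (Rel.intra t i j h)

theorem e_idemA (t : Bool) (i : Fin (n-1)) :
    gen t i * gen (!t) i * (gen t i * gen (!t) i) = gen t i * gen (!t) i := by
  simpa [gen, map_mul] using rel_eq (Rel.idemA t i)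

theorem e_jonesA (t : Bool) (i j : Fin (n-1)) (h : adj i j) :
    gen t i * gen (!t) i * (gen t j * gen (!t) j) * (gen t i * gen (!t) i) =
      gen t i * gen (!t) i := by
  simpa [gen, map_mul] using rel_eq (Rel.jonesA t i j h)

end OriProof

namespace OriProof
open Origami
variable {n : ℕ}

section Generic
variable {M : Type*} [Monoid M]

def lett (a b c d : M) : Fin 4 → M := ![a, b, c, d]

def wrd (a b c d : M) : List (Fin 4) → M
  | [] => 1
  | g :: l => lett a b c d g * wrd a b c d l

variable (a b c d : M)

theorem wrd_append (x y : List (Fin 4)) :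
    wrd a b c d (x ++ y) = wrd a b c d x * wrd a b c d y := by
  induction x with
  | nil => simp [wrd]
  | cons g l ih => simp [wrd, ih, mul_assoc]

theorem wstep {u v : List (Fin 4)} (h : wrd a b c d u = wrd a b c d v)
    (x y : List (Fin 4)) :
    wrd a b c d (x ++ u ++ y) = wrd a b c d (x ++ v ++ y) := by
  rw [wrd_append, wrd_append, wrd_append, wrd_append, h]

structure OriTop (a b : M) : Prop where
  raa : a * a = a
  rbb : b * b = b
  riab : a * b * (a * b) = a * b
  riba : b * a * (b * a) = b * a

structure OriRel (a b c d : M) : Prop where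
  raa : a * a = a
  rbb : b * b = b
  rcc : c * c = c
  rdd : d * d = d
  rjaca : a * c * a = a
  rjcac : c * a * c = c
  rjbdb : b * d * b = b
  rjdbd : d * b * d = d
  rad : a * d = d * a
  rbc : b * c = c * b
  riab : a * b * (a * b) = a * b
  riba : b * a * (b * a) = b * a
  ricd : c * d * (c * d) = c * d
  ridc : d * c * (d * c) = d * c
  rjab : a * b * (c * d) * (a * b) = a * b
  rjba : b * a * (d * c) * (b * a) = b * a
  rjcd : c * d * (a * b) * (c * d) = c * d
  rjdc : d * c * (b * a) * (d * c) = d * c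

variable {a b c d}

theorem OriRel.toTop (h : OriRel a b c d) : OriTop a b :=
  ⟨h.raa, h.rbb, h.riab, h.riba⟩

/-- commuting an element with a word -/
theorem commute_wrd {x : M} (ha : Commute x a) (hb : Commute x b)
    (hc : Commute x c) (hd : Commute x d) (l : List (Fin 4)) :
    Commute x (wrd a b c d l) := by
  induction l with
  | nil => exact Commute.one_right x
  | cons g l ih =>
    refine Commute.mul_right ?_ ih
    fin_cases g <;> simpa [lett]

end Generic

theorem oriRel_inst (k : ℕ) (hk1 : 1 ≤ k) (hk : k < n - 1) :
    OriRel (Aq n k) (Bq n k) (Aq n (k-1)) (Bq n (k-1)) := by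
  have hk' : k - 1 < n - 1 := by omega
  have hA : Aq n k = gen true ⟨k, hk⟩ := dif_pos hk
  have hB : Bq n k = gen false ⟨k, hk⟩ := dif_pos hk
  have hA' : Aq n (k-1) = gen true ⟨k-1, hk'⟩ := dif_pos hk'
  have hB' : Bq n (k-1) = gen false ⟨k-1, hk'⟩ := dif_pos hk'
  have hadj : adj (⟨k, hk⟩ : Fin (n-1)) ⟨k-1, hk'⟩ := Or.inr (by simp; omega)
  have hadj' : adj (⟨k-1, hk'⟩ : Fin (n-1)) ⟨k, hk⟩ := Or.inl (by simp; omega)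
  have hne : (⟨k, hk⟩ : Fin (n-1)) ≠ ⟨k-1, hk'⟩ := by
    simp only [ne_eq, Fin.mk.injEq]; omega
  have hne' : (⟨k-1, hk'⟩ : Fin (n-1)) ≠ ⟨k, hk⟩ := by
    simp only [ne_eq, Fin.mk.injEq]; omega
  rw [hA, hB, hA', hB']
  constructor
  · exact e_idem true _
  · exact e_idem false _
  · exact e_idem true _
  · exact e_idem false _
  · exact e_jones true _ _ hadj
  · exact e_jones true _ _ hadj'
  · exact e_jones false _ _ hadj
  · exact e_jones false _ _ hadj'
  · simpa using e_inter true ⟨k, hk⟩ ⟨k-1, hk'⟩ hne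
  · simpa using e_inter false ⟨k, hk⟩ ⟨k-1, hk'⟩ hne
  · simpa using e_idemA true ⟨k, hk⟩
  · simpa using e_idemA false ⟨k, hk⟩
  · simpa using e_idemA true ⟨k-1, hk'⟩
  · simpa using e_idemA false ⟨k-1, hk'⟩
  · simpa using e_jonesA true ⟨k, hk⟩ ⟨k-1, hk'⟩ hadj
  · simpa using e_jonesA false ⟨k, hk⟩ ⟨k-1, hk'⟩ hadj
  · simpa using e_jonesA true ⟨k-1, hk'⟩ ⟨k, hk⟩ hadj'
  · simpa using e_jonesA false ⟨k-1, hk'⟩ ⟨k, hk⟩ hadj'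

theorem oriTop_inst (k : ℕ) : OriTop (Aq n k) (Bq n k) := by
  by_cases hk : k < n - 1
  · rw [show Aq n k = gen true ⟨k, hk⟩ from dif_pos hk,
      show Bq n k = gen false ⟨k, hk⟩ from dif_pos hk]
    exact ⟨e_idem true _, e_idem false _, by simpa using e_idemA true ⟨k, hk⟩,
      by simpa using e_idemA false ⟨k, hk⟩⟩
  · rw [show Aq n k = 1 from dif_neg hk, show Bq n k = 1 from dif_neg hk]
    exact ⟨by simp, by simp, by simp, by simp⟩

end OriProof

namespace OriProof
variable {M : Type*} [Monoid M]

/-- the seven cluster words (over letters 0,1) -/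
def clw : Fin 7 → List (Fin 4)
  | 0 => [] | 1 => [0] | 2 => [1] | 3 => [0,1] | 4 => [1,0] | 5 => [0,1,0] | 6 => [1,0,1]

/-- the seven cluster words shifted to low letters 2,3 -/
def clwLow : Fin 7 → List (Fin 4)
  | 0 => [] | 1 => [2] | 2 => [3] | 3 => [2,3] | 4 => [3,2] | 5 => [2,3,2] | 6 => [3,2,3]

def gcl : Fin 2 → Fin 7
  | 0 => 1 | 1 => 2

theorem wrd_hi (a b c d c' d' : M) (tc : Fin 7) :
    wrd a b c d (clw tc) = wrd a b c' d' (clw tc) := by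
  fin_cases tc <;> simp [clw, wrd, lett]

theorem wrd_lo (a b c d : M) (sc : Fin 7) :
    wrd a b c d (clwLow sc) = wrd c d 1 1 (clw sc) := by
  fin_cases sc <;> simp [clw, clwLow, wrd, lett]

end OriProof

namespace OriProof
variable {M : Type*} [Monoid M] {a b c d : M}

theorem OriTop.w_raa (h : OriTop a b) (c d : M) : wrd a b c d [0, 0] = wrd a b c d [0] := by simpa [wrd, lett, mul_assoc] using h.raa
theorem OriRel.w_raa (h : OriRel a b c d) : wrd a b c d [0, 0] = wrd a b c d [0] := by simpa [wrd, lett, mul_assoc] using h.raa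
theorem OriTop.w_rbb (h : OriTop a b) (c d : M) : wrd a b c d [1, 1] = wrd a b c d [1] := by simpa [wrd, lett, mul_assoc] using h.rbb
theorem OriRel.w_rbb (h : OriRel a b c d) : wrd a b c d [1, 1] = wrd a b c d [1] := by simpa [wrd, lett, mul_assoc] using h.rbb
theorem OriRel.w_rcc (h : OriRel a b c d) : wrd a b c d [2, 2] = wrd a b c d [2] := by simpa [wrd, lett, mul_assoc] using h.rcc
theorem OriRel.w_rdd (h : OriRel a b c d) : wrd a b c d [3, 3] = wrd a b c d [3] := by simpa [wrd, lett, mul_assoc] using h.rdd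
theorem OriRel.w_rjaca (h : OriRel a b c d) : wrd a b c d [0, 2, 0] = wrd a b c d [0] := by simpa [wrd, lett, mul_assoc] using h.rjaca
theorem OriRel.w_rjcac (h : OriRel a b c d) : wrd a b c d [2, 0, 2] = wrd a b c d [2] := by simpa [wrd, lett, mul_assoc] using h.rjcac
theorem OriRel.w_rjbdb (h : OriRel a b c d) : wrd a b c d [1, 3, 1] = wrd a b c d [1] := by simpa [wrd, lett, mul_assoc] using h.rjbdb
theorem OriRel.w_rjdbd (h : OriRel a b c d) : wrd a b c d [3, 1, 3] = wrd a b c d [3] := by simpa [wrd, lett, mul_assoc] using h.rjdbd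
theorem OriRel.w_rad (h : OriRel a b c d) : wrd a b c d [0, 3] = wrd a b c d [3, 0] := by simpa [wrd, lett, mul_assoc] using h.rad
theorem OriRel.w_rbc (h : OriRel a b c d) : wrd a b c d [1, 2] = wrd a b c d [2, 1] := by simpa [wrd, lett, mul_assoc] using h.rbc
theorem OriTop.w_riab (h : OriTop a b) (c d : M) : wrd a b c d [0, 1, 0, 1] = wrd a b c d [0, 1] := by simpa [wrd, lett, mul_assoc] using h.riab
theorem OriRel.w_riab (h : OriRel a b c d) : wrd a b c d [0, 1, 0, 1] = wrd a b c d [0, 1] := by simpa [wrd, lett, mul_assoc] using h.riab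
theorem OriTop.w_riba (h : OriTop a b) (c d : M) : wrd a b c d [1, 0, 1, 0] = wrd a b c d [1, 0] := by simpa [wrd, lett, mul_assoc] using h.riba
theorem OriRel.w_riba (h : OriRel a b c d) : wrd a b c d [1, 0, 1, 0] = wrd a b c d [1, 0] := by simpa [wrd, lett, mul_assoc] using h.riba
theorem OriRel.w_ricd (h : OriRel a b c d) : wrd a b c d [2, 3, 2, 3] = wrd a b c d [2, 3] := by simpa [wrd, lett, mul_assoc] using h.ricd
theorem OriRel.w_ridc (h : OriRel a b c d) : wrd a b c d [3, 2, 3, 2] = wrd a b c d [3, 2] := by simpa [wrd, lett, mul_assoc] using h.ridc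
theorem OriRel.w_rjab (h : OriRel a b c d) : wrd a b c d [0, 1, 2, 3, 0, 1] = wrd a b c d [0, 1] := by simpa [wrd, lett, mul_assoc] using h.rjab
theorem OriRel.w_rjba (h : OriRel a b c d) : wrd a b c d [1, 0, 3, 2, 1, 0] = wrd a b c d [1, 0] := by simpa [wrd, lett, mul_assoc] using h.rjba
theorem OriRel.w_rjcd (h : OriRel a b c d) : wrd a b c d [2, 3, 0, 1, 2, 3] = wrd a b c d [2, 3] := by simpa [wrd, lett, mul_assoc] using h.rjcd
theorem OriRel.w_rjdc (h : OriRel a b c d) : wrd a b c d [3, 2, 1, 0, 3, 2] = wrd a b c d [3, 2] := by simpa [wrd, lett, mul_assoc] using h.rjdc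

theorem gpT_0_0 (h : OriTop a b) (c d : M) :
    wrd a b c d [0] = wrd a b c d [0] := by
  rfl

theorem gpT_0_1 (h : OriTop a b) (c d : M) :
    wrd a b c d [1] = wrd a b c d [1] := by
  rfl

theorem gpT_1_0 (h : OriTop a b) (c d : M) :
    wrd a b c d [0, 0] = wrd a b c d [0] := by
  calc wrd a b c d [0, 0]
      = wrd a b c d [0] := wstep a b c d (h.w_raa c d) [] []

theorem gpT_1_1 (h : OriTop a b) (c d : M) :
    wrd a b c d [0, 1] = wrd a b c d [0, 1] := by
  rfl

theorem gpT_2_0 (h : OriTop a b) (c d : M) :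
    wrd a b c d [1, 0] = wrd a b c d [1, 0] := by
  rfl

theorem gpT_2_1 (h : OriTop a b) (c d : M) :
    wrd a b c d [1, 1] = wrd a b c d [1] := by
  calc wrd a b c d [1, 1]
      = wrd a b c d [1] := wstep a b c d (h.w_rbb c d) [] []

theorem gpT_3_0 (h : OriTop a b) (c d : M) :
    wrd a b c d [0, 1, 0] = wrd a b c d [0, 1, 0] := by
  rfl

theorem gpT_3_1 (h : OriTop a b) (c d : M) :
    wrd a b c d [0, 1, 1] = wrd a b c d [0, 1] := by
  calc wrd a b c d [0, 1, 1]
      = wrd a b c d [0, 1] := wstep a b c d (h.w_rbb c d) [0] []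

theorem gpT_4_0 (h : OriTop a b) (c d : M) :
    wrd a b c d [1, 0, 0] = wrd a b c d [1, 0] := by
  calc wrd a b c d [1, 0, 0]
      = wrd a b c d [1, 0] := wstep a b c d (h.w_raa c d) [1] []

theorem gpT_4_1 (h : OriTop a b) (c d : M) :
    wrd a b c d [1, 0, 1] = wrd a b c d [1, 0, 1] := by
  rfl

theorem gpT_5_0 (h : OriTop a b) (c d : M) :
    wrd a b c d [0, 1, 0, 0] = wrd a b c d [0, 1, 0] := by
  calc wrd a b c d [0, 1, 0, 0]
      = wrd a b c d [0, 1, 0] := wstep a b c d (h.w_raa c d) [0, 1] []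

theorem gpT_5_1 (h : OriTop a b) (c d : M) :
    wrd a b c d [0, 1, 0, 1] = wrd a b c d [0, 1] := by
  calc wrd a b c d [0, 1, 0, 1]
      = wrd a b c d [0, 1] := wstep a b c d (h.w_riab c d) [] []

theorem gpT_6_0 (h : OriTop a b) (c d : M) :
    wrd a b c d [1, 0, 1, 0] = wrd a b c d [1, 0] := by
  calc wrd a b c d [1, 0, 1, 0]
      = wrd a b c d [1, 0] := wstep a b c d (h.w_riba c d) [] []

theorem gpT_6_1 (h : OriTop a b) (c d : M) :
    wrd a b c d [1, 0, 1, 1] = wrd a b c d [1, 0, 1] := by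
  calc wrd a b c d [1, 0, 1, 1]
      = wrd a b c d [1, 0, 1] := wstep a b c d (h.w_rbb c d) [1, 0] []

theorem gpTT_0 (h : OriTop a b) (c d : M) :
    wrd a b c d [] = wrd a b c d [] := by
  rfl

theorem gpTT_1 (h : OriTop a b) (c d : M) :
    wrd a b c d [0, 0] = wrd a b c d [0] := by
  calc wrd a b c d [0, 0]
      = wrd a b c d [0] := wstep a b c d (h.w_raa c d) [] []

theorem gpTT_2 (h : OriTop a b) (c d : M) :
    wrd a b c d [1, 1] = wrd a b c d [1] := by
  calc wrd a b c d [1, 1]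
      = wrd a b c d [1] := wstep a b c d (h.w_rbb c d) [] []

theorem gpTT_3 (h : OriTop a b) (c d : M) :
    wrd a b c d [0, 1, 0, 1] = wrd a b c d [0, 1] := by
  calc wrd a b c d [0, 1, 0, 1]
      = wrd a b c d [0, 1] := wstep a b c d (h.w_riab c d) [] []

theorem gpTT_4 (h : OriTop a b) (c d : M) :
    wrd a b c d [1, 0, 1, 0] = wrd a b c d [1, 0] := by
  calc wrd a b c d [1, 0, 1, 0]
      = wrd a b c d [1, 0] := wstep a b c d (h.w_riba c d) [] []

theorem gpTT_5 (h : OriTop a b) (c d : M) :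
    wrd a b c d [0, 1, 0, 0, 1, 0] = wrd a b c d [0, 1, 0] := by
  calc wrd a b c d [0, 1, 0, 0, 1, 0]
      = wrd a b c d [0, 1, 0, 1, 0] := wstep a b c d (h.w_raa c d) [0, 1] [1, 0]
    _ = wrd a b c d [0, 1, 0] := wstep a b c d (h.w_riab c d) [] [0]

theorem gpTT_6 (h : OriTop a b) (c d : M) :
    wrd a b c d [1, 0, 1, 1, 0, 1] = wrd a b c d [1, 0, 1] := by
  calc wrd a b c d [1, 0, 1, 1, 0, 1]
      = wrd a b c d [1, 0, 1, 0, 1] := wstep a b c d (h.w_rbb c d) [1, 0] [0, 1]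
    _ = wrd a b c d [1, 0, 1] := wstep a b c d (h.w_riab c d) [1] []

theorem gI_1_0 (h : OriRel a b c d) :
    wrd a b c d [0, 0] = wrd a b c d [0] := by
  calc wrd a b c d [0, 0]
      = wrd a b c d [0] := wstep a b c d (h.w_raa) [] []

theorem gI_1_1 (h : OriRel a b c d) :
    wrd a b c d [0, 2, 0] = wrd a b c d [0] := by
  calc wrd a b c d [0, 2, 0]
      = wrd a b c d [0] := wstep a b c d (h.w_rjaca) [] []

theorem gI_1_2 (h : OriRel a b c d) :
    wrd a b c d [0, 3, 0] = wrd a b c d [0, 3] := by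
  calc wrd a b c d [0, 3, 0]
      = wrd a b c d [0, 0, 3] := wstep a b c d (h.w_rad).symm [0] []
    _ = wrd a b c d [0, 3] := wstep a b c d (h.w_raa) [] [3]

theorem gI_1_3 (h : OriRel a b c d) :
    wrd a b c d [0, 2, 3, 0] = wrd a b c d [0, 3] := by
  calc wrd a b c d [0, 2, 3, 0]
      = wrd a b c d [0, 2, 0, 3] := wstep a b c d (h.w_rad).symm [0, 2] []
    _ = wrd a b c d [0, 3] := wstep a b c d (h.w_rjaca) [] [3]

theorem gI_1_4 (h : OriRel a b c d) :
    wrd a b c d [0, 3, 2, 0] = wrd a b c d [0, 3] := by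
  calc wrd a b c d [0, 3, 2, 0]
      = wrd a b c d [3, 0, 2, 0] := wstep a b c d (h.w_rad) [] [2, 0]
    _ = wrd a b c d [3, 0] := wstep a b c d (h.w_rjaca) [3] []
    _ = wrd a b c d [0, 3] := wstep a b c d (h.w_rad).symm [] []

theorem gI_1_5 (h : OriRel a b c d) :
    wrd a b c d [0, 2, 3, 2, 0] = wrd a b c d [0, 3] := by
  calc wrd a b c d [0, 2, 3, 2, 0]
      = wrd a b c d [0, 2, 3, 0, 1, 2, 3, 2, 0] := wstep a b c d (h.w_rjcd).symm [0] [2, 0]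
    _ = wrd a b c d [0, 3, 1, 2, 3, 2, 0] := wstep a b c d (gI_1_3 h) [] [1, 2, 3, 2, 0]
    _ = wrd a b c d [0, 3, 3, 1, 2, 3, 2, 0] := wstep a b c d (h.w_rdd).symm [0] [1, 2, 3, 2, 0]
    _ = wrd a b c d [0, 3, 2, 0, 3, 1, 2, 3, 2, 0] := wstep a b c d (gI_1_4 h).symm [] [3, 1, 2, 3, 2, 0]
    _ = wrd a b c d [0, 3, 2, 3, 0, 1, 2, 3, 2, 0] := wstep a b c d (h.w_rad) [0, 3, 2] [1, 2, 3, 2, 0]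
    _ = wrd a b c d [0, 3, 2, 3, 2, 0] := wstep a b c d (h.w_rjcd) [0, 3] [2, 0]
    _ = wrd a b c d [0, 3, 2, 0] := wstep a b c d (h.w_ridc) [0] [0]
    _ = wrd a b c d [0, 3] := wstep a b c d (gI_1_4 h) [] []

theorem gI_1_6 (h : OriRel a b c d) :
    wrd a b c d [0, 3, 2, 3, 0] = wrd a b c d [0, 3] := by
  calc wrd a b c d [0, 3, 2, 3, 0]
      = wrd a b c d [0, 3, 2, 0, 3] := wstep a b c d (h.w_rad).symm [0, 3, 2] []
    _ = wrd a b c d [0, 3, 3] := wstep a b c d (gI_1_4 h) [] [3]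
    _ = wrd a b c d [0, 3] := wstep a b c d (h.w_rdd) [0] []

theorem gI_2_0 (h : OriRel a b c d) :
    wrd a b c d [1, 1] = wrd a b c d [1] := by
  calc wrd a b c d [1, 1]
      = wrd a b c d [1] := wstep a b c d (h.w_rbb) [] []

theorem gI_2_1 (h : OriRel a b c d) :
    wrd a b c d [1, 2, 1] = wrd a b c d [1, 2] := by
  calc wrd a b c d [1, 2, 1]
      = wrd a b c d [1, 1, 2] := wstep a b c d (h.w_rbc).symm [1] []
    _ = wrd a b c d [1, 2] := wstep a b c d (h.w_rbb) [] [2]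

theorem gI_2_2 (h : OriRel a b c d) :
    wrd a b c d [1, 3, 1] = wrd a b c d [1] := by
  calc wrd a b c d [1, 3, 1]
      = wrd a b c d [1] := wstep a b c d (h.w_rjbdb) [] []

theorem gI_2_3 (h : OriRel a b c d) :
    wrd a b c d [1, 2, 3, 1] = wrd a b c d [1, 2] := by
  calc wrd a b c d [1, 2, 3, 1]
      = wrd a b c d [2, 1, 3, 1] := wstep a b c d (h.w_rbc) [] [3, 1]
    _ = wrd a b c d [2, 1] := wstep a b c d (h.w_rjbdb) [2] []
    _ = wrd a b c d [1, 2] := wstep a b c d (h.w_rbc).symm [] []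

theorem gI_2_4 (h : OriRel a b c d) :
    wrd a b c d [1, 3, 2, 1] = wrd a b c d [1, 2] := by
  calc wrd a b c d [1, 3, 2, 1]
      = wrd a b c d [1, 3, 1, 2] := wstep a b c d (h.w_rbc).symm [1, 3] []
    _ = wrd a b c d [1, 2] := wstep a b c d (h.w_rjbdb) [] [2]

theorem gI_2_5 (h : OriRel a b c d) :
    wrd a b c d [1, 2, 3, 2, 1] = wrd a b c d [1, 2] := by
  calc wrd a b c d [1, 2, 3, 2, 1]
      = wrd a b c d [1, 2, 3, 1, 2] := wstep a b c d (h.w_rbc).symm [1, 2, 3] []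
    _ = wrd a b c d [1, 2, 2] := wstep a b c d (gI_2_3 h) [] [2]
    _ = wrd a b c d [1, 2] := wstep a b c d (h.w_rcc) [1] []

theorem gI_2_6 (h : OriRel a b c d) :
    wrd a b c d [1, 3, 2, 3, 1] = wrd a b c d [1, 2] := by
  calc wrd a b c d [1, 3, 2, 3, 1]
      = wrd a b c d [1, 3, 2, 3, 0, 1, 2, 3, 1] := wstep a b c d (h.w_rjcd).symm [1, 3] [1]
    _ = wrd a b c d [1, 3, 2, 3, 0, 1, 2] := wstep a b c d (gI_2_3 h) [1, 3, 2, 3, 0] []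
    _ = wrd a b c d [1, 3, 2, 3, 0, 1, 2, 3, 2, 1] := wstep a b c d (gI_2_5 h).symm [1, 3, 2, 3, 0] []
    _ = wrd a b c d [1, 3, 2, 3, 2, 1] := wstep a b c d (h.w_rjcd) [1, 3] [2, 1]
    _ = wrd a b c d [1, 3, 2, 1] := wstep a b c d (h.w_ridc) [1] [1]
    _ = wrd a b c d [1, 2] := wstep a b c d (gI_2_4 h) [] []

theorem gI_3_0 (h : OriRel a b c d) :
    wrd a b c d [0, 1, 0, 1] = wrd a b c d [0, 1] := by
  calc wrd a b c d [0, 1, 0, 1]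
      = wrd a b c d [0, 1] := wstep a b c d (h.w_riab) [] []

theorem gI_3_1 (h : OriRel a b c d) :
    wrd a b c d [0, 1, 2, 0, 1] = wrd a b c d [0, 1] := by
  calc wrd a b c d [0, 1, 2, 0, 1]
      = wrd a b c d [0, 1, 2, 0, 1, 2, 3, 0, 1] := wstep a b c d (h.w_rjab).symm [0, 1, 2] []
    _ = wrd a b c d [0, 1, 2, 0, 2, 1, 3, 0, 1] := wstep a b c d (h.w_rbc) [0, 1, 2, 0] [3, 0, 1]
    _ = wrd a b c d [0, 1, 2, 1, 3, 0, 1] := wstep a b c d (h.w_rjcac) [0, 1] [1, 3, 0, 1]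
    _ = wrd a b c d [0, 1, 2, 3, 0, 1] := wstep a b c d (gI_2_1 h) [0] [3, 0, 1]
    _ = wrd a b c d [0, 1] := wstep a b c d (h.w_rjab) [] []

theorem gI_3_2 (h : OriRel a b c d) :
    wrd a b c d [0, 1, 3, 0, 1] = wrd a b c d [0, 1] := by
  calc wrd a b c d [0, 1, 3, 0, 1]
      = wrd a b c d [0, 1, 3, 0, 1, 2, 0, 1] := wstep a b c d (gI_3_1 h).symm [0, 1, 3] []
    _ = wrd a b c d [0, 1, 3, 0, 2, 1, 0, 1] := wstep a b c d (h.w_rbc) [0, 1, 3, 0] [0, 1]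
    _ = wrd a b c d [0, 1, 0, 3, 2, 1, 0, 1] := wstep a b c d (h.w_rad).symm [0, 1] [2, 1, 0, 1]
    _ = wrd a b c d [0, 1, 0, 1] := wstep a b c d (h.w_rjba) [0] [1]
    _ = wrd a b c d [0, 1] := wstep a b c d (h.w_riab) [] []

theorem gI_3_3 (h : OriRel a b c d) :
    wrd a b c d [0, 1, 2, 3, 0, 1] = wrd a b c d [0, 1] := by
  calc wrd a b c d [0, 1, 2, 3, 0, 1]
      = wrd a b c d [0, 1] := wstep a b c d (h.w_rjab) [] []

theorem gI_3_4 (h : OriRel a b c d) :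
    wrd a b c d [0, 1, 3, 2, 0, 1] = wrd a b c d [0, 1] := by
  calc wrd a b c d [0, 1, 3, 2, 0, 1]
      = wrd a b c d [0, 1, 3, 2, 1, 0, 3, 2, 0, 1] := wstep a b c d (h.w_rjdc).symm [0, 1] [0, 1]
    _ = wrd a b c d [0, 1, 2, 0, 3, 2, 0, 1] := wstep a b c d (gI_2_4 h) [0] [0, 3, 2, 0, 1]
    _ = wrd a b c d [0, 1, 2, 3, 0, 2, 0, 1] := wstep a b c d (h.w_rad) [0, 1, 2] [2, 0, 1]
    _ = wrd a b c d [0, 1, 2, 3, 0, 1] := wstep a b c d (h.w_rjaca) [0, 1, 2, 3] [1]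
    _ = wrd a b c d [0, 1] := wstep a b c d (h.w_rjab) [] []

theorem gI_3_5 (h : OriRel a b c d) :
    wrd a b c d [0, 1, 2, 3, 2, 0, 1] = wrd a b c d [0, 1] := by
  calc wrd a b c d [0, 1, 2, 3, 2, 0, 1]
      = wrd a b c d [0, 1, 2, 0, 2, 3, 2, 0, 1] := wstep a b c d (h.w_rjcac).symm [0, 1] [3, 2, 0, 1]
    _ = wrd a b c d [0, 1, 2, 0, 3, 1] := wstep a b c d (gI_1_5 h) [0, 1, 2] [1]
    _ = wrd a b c d [0, 1, 2, 3, 0, 1] := wstep a b c d (h.w_rad) [0, 1, 2] [1]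
    _ = wrd a b c d [0, 1] := wstep a b c d (h.w_rjab) [] []

theorem gI_3_6 (h : OriRel a b c d) :
    wrd a b c d [0, 1, 3, 2, 3, 0, 1] = wrd a b c d [0, 1] := by
  calc wrd a b c d [0, 1, 3, 2, 3, 0, 1]
      = wrd a b c d [0, 1, 3, 2, 3, 1, 3, 0, 1] := wstep a b c d (h.w_rjdbd).symm [0, 1, 3, 2] [0, 1]
    _ = wrd a b c d [0, 1, 2, 3, 0, 1] := wstep a b c d (gI_2_6 h) [0] [3, 0, 1]
    _ = wrd a b c d [0, 1] := wstep a b c d (h.w_rjab) [] []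

theorem gI_4_0 (h : OriRel a b c d) :
    wrd a b c d [1, 0, 1, 0] = wrd a b c d [1, 0] := by
  calc wrd a b c d [1, 0, 1, 0]
      = wrd a b c d [1, 0] := wstep a b c d (h.w_riba) [] []

theorem gI_4_1 (h : OriRel a b c d) :
    wrd a b c d [1, 0, 2, 1, 0] = wrd a b c d [1, 0] := by
  calc wrd a b c d [1, 0, 2, 1, 0]
      = wrd a b c d [1, 0, 2, 1, 0, 1, 0] := wstep a b c d (h.w_riba).symm [1, 0, 2] []
    _ = wrd a b c d [1, 0, 1, 2, 0, 1, 0] := wstep a b c d (h.w_rbc).symm [1, 0] [0, 1, 0]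
    _ = wrd a b c d [1, 0, 1, 0] := wstep a b c d (gI_3_1 h) [1] [0]
    _ = wrd a b c d [1, 0] := wstep a b c d (h.w_riba) [] []

theorem gI_4_2 (h : OriRel a b c d) :
    wrd a b c d [1, 0, 3, 1, 0] = wrd a b c d [1, 0] := by
  calc wrd a b c d [1, 0, 3, 1, 0]
      = wrd a b c d [1, 0, 1, 0, 3, 1, 0] := wstep a b c d (h.w_riba).symm [] [3, 1, 0]
    _ = wrd a b c d [1, 0, 1, 3, 0, 1, 0] := wstep a b c d (h.w_rad) [1, 0, 1] [1, 0]
    _ = wrd a b c d [1, 0, 1, 0] := wstep a b c d (gI_3_2 h) [1] [0]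
    _ = wrd a b c d [1, 0] := wstep a b c d (h.w_riba) [] []

theorem gI_4_3 (h : OriRel a b c d) :
    wrd a b c d [1, 0, 2, 3, 1, 0] = wrd a b c d [1, 0] := by
  calc wrd a b c d [1, 0, 2, 3, 1, 0]
      = wrd a b c d [1, 0, 2, 3, 0, 1, 2, 3, 1, 0] := wstep a b c d (h.w_rjcd).symm [1, 0] [1, 0]
    _ = wrd a b c d [1, 0, 3, 1, 2, 3, 1, 0] := wstep a b c d (gI_1_3 h) [1] [1, 2, 3, 1, 0]
    _ = wrd a b c d [1, 0, 3, 2, 1, 3, 1, 0] := wstep a b c d (h.w_rbc) [1, 0, 3] [3, 1, 0]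
    _ = wrd a b c d [1, 0, 3, 2, 1, 0] := wstep a b c d (h.w_rjbdb) [1, 0, 3, 2] [0]
    _ = wrd a b c d [1, 0] := wstep a b c d (h.w_rjba) [] []

theorem gI_4_4 (h : OriRel a b c d) :
    wrd a b c d [1, 0, 3, 2, 1, 0] = wrd a b c d [1, 0] := by
  calc wrd a b c d [1, 0, 3, 2, 1, 0]
      = wrd a b c d [1, 0] := wstep a b c d (h.w_rjba) [] []

theorem gI_4_5 (h : OriRel a b c d) :
    wrd a b c d [1, 0, 2, 3, 2, 1, 0] = wrd a b c d [1, 0] := by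
  calc wrd a b c d [1, 0, 2, 3, 2, 1, 0]
      = wrd a b c d [1, 0, 2, 3, 2, 0, 2, 1, 0] := wstep a b c d (h.w_rjcac).symm [1, 0, 2, 3] [1, 0]
    _ = wrd a b c d [1, 0, 3, 2, 1, 0] := wstep a b c d (gI_1_5 h) [1] [2, 1, 0]
    _ = wrd a b c d [1, 0] := wstep a b c d (h.w_rjba) [] []

theorem gI_4_6 (h : OriRel a b c d) :
    wrd a b c d [1, 0, 3, 2, 3, 1, 0] = wrd a b c d [1, 0] := by
  calc wrd a b c d [1, 0, 3, 2, 3, 1, 0]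
      = wrd a b c d [1, 0, 3, 1, 3, 2, 3, 1, 0] := wstep a b c d (h.w_rjdbd).symm [1, 0] [2, 3, 1, 0]
    _ = wrd a b c d [1, 0, 3, 1, 2, 0] := wstep a b c d (gI_2_6 h) [1, 0, 3] [0]
    _ = wrd a b c d [1, 0, 3, 2, 1, 0] := wstep a b c d (h.w_rbc) [1, 0, 3] [0]
    _ = wrd a b c d [1, 0] := wstep a b c d (h.w_rjba) [] []

theorem gI_5_0 (h : OriRel a b c d) :
    wrd a b c d [0, 1, 0, 0, 1, 0] = wrd a b c d [0, 1, 0] := by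
  calc wrd a b c d [0, 1, 0, 0, 1, 0]
      = wrd a b c d [0, 1, 0] := wstep a b c d (gpTT_5 h.toTop c d) [] []

theorem gI_5_1 (h : OriRel a b c d) :
    wrd a b c d [0, 1, 0, 2, 0, 1, 0] = wrd a b c d [0, 1, 0] := by
  calc wrd a b c d [0, 1, 0, 2, 0, 1, 0]
      = wrd a b c d [0, 1, 0, 1, 0] := wstep a b c d (h.w_rjaca) [0, 1] [1, 0]
    _ = wrd a b c d [0, 1, 0] := wstep a b c d (h.w_riab) [] [0]

theorem gI_5_2 (h : OriRel a b c d) :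
    wrd a b c d [0, 1, 0, 3, 0, 1, 0] = wrd a b c d [0, 1, 0] := by
  calc wrd a b c d [0, 1, 0, 3, 0, 1, 0]
      = wrd a b c d [0, 1, 0, 3, 1, 0] := wstep a b c d (gI_1_2 h) [0, 1] [1, 0]
    _ = wrd a b c d [0, 1, 0] := wstep a b c d (gI_4_2 h) [0] []

theorem gI_5_3 (h : OriRel a b c d) :
    wrd a b c d [0, 1, 0, 2, 3, 0, 1, 0] = wrd a b c d [0, 1, 0] := by
  calc wrd a b c d [0, 1, 0, 2, 3, 0, 1, 0]
      = wrd a b c d [0, 1, 0, 3, 1, 0] := wstep a b c d (gI_1_3 h) [0, 1] [1, 0]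
    _ = wrd a b c d [0, 1, 0] := wstep a b c d (gI_4_2 h) [0] []

theorem gI_5_4 (h : OriRel a b c d) :
    wrd a b c d [0, 1, 0, 3, 2, 0, 1, 0] = wrd a b c d [0, 1, 0] := by
  calc wrd a b c d [0, 1, 0, 3, 2, 0, 1, 0]
      = wrd a b c d [0, 1, 0, 3, 1, 0] := wstep a b c d (gI_1_4 h) [0, 1] [1, 0]
    _ = wrd a b c d [0, 1, 0] := wstep a b c d (gI_4_2 h) [0] []

theorem gI_5_5 (h : OriRel a b c d) :
    wrd a b c d [0, 1, 0, 2, 3, 2, 0, 1, 0] = wrd a b c d [0, 1, 0] := by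
  calc wrd a b c d [0, 1, 0, 2, 3, 2, 0, 1, 0]
      = wrd a b c d [0, 1, 0, 3, 1, 0] := wstep a b c d (gI_1_5 h) [0, 1] [1, 0]
    _ = wrd a b c d [0, 1, 0] := wstep a b c d (gI_4_2 h) [0] []

theorem gI_5_6 (h : OriRel a b c d) :
    wrd a b c d [0, 1, 0, 3, 2, 3, 0, 1, 0] = wrd a b c d [0, 1, 0] := by
  calc wrd a b c d [0, 1, 0, 3, 2, 3, 0, 1, 0]
      = wrd a b c d [0, 1, 0, 3, 1, 0] := wstep a b c d (gI_1_6 h) [0, 1] [1, 0]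
    _ = wrd a b c d [0, 1, 0] := wstep a b c d (gI_4_2 h) [0] []

theorem gI_6_0 (h : OriRel a b c d) :
    wrd a b c d [1, 0, 1, 1, 0, 1] = wrd a b c d [1, 0, 1] := by
  calc wrd a b c d [1, 0, 1, 1, 0, 1]
      = wrd a b c d [1, 0, 1] := wstep a b c d (gpTT_6 h.toTop c d) [] []

theorem gI_6_1 (h : OriRel a b c d) :
    wrd a b c d [1, 0, 1, 2, 1, 0, 1] = wrd a b c d [1, 0, 1] := by
  calc wrd a b c d [1, 0, 1, 2, 1, 0, 1]
      = wrd a b c d [1, 0, 1, 2, 0, 1] := wstep a b c d (gI_2_1 h) [1, 0] [0, 1]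
    _ = wrd a b c d [1, 0, 1] := wstep a b c d (gI_3_1 h) [1] []

theorem gI_6_2 (h : OriRel a b c d) :
    wrd a b c d [1, 0, 1, 3, 1, 0, 1] = wrd a b c d [1, 0, 1] := by
  calc wrd a b c d [1, 0, 1, 3, 1, 0, 1]
      = wrd a b c d [1, 0, 1, 0, 1] := wstep a b c d (h.w_rjbdb) [1, 0] [0, 1]
    _ = wrd a b c d [1, 0, 1] := wstep a b c d (h.w_riab) [1] []

theorem gI_6_3 (h : OriRel a b c d) :
    wrd a b c d [1, 0, 1, 2, 3, 1, 0, 1] = wrd a b c d [1, 0, 1] := by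
  calc wrd a b c d [1, 0, 1, 2, 3, 1, 0, 1]
      = wrd a b c d [1, 0, 1, 2, 0, 1] := wstep a b c d (gI_2_3 h) [1, 0] [0, 1]
    _ = wrd a b c d [1, 0, 1] := wstep a b c d (gI_3_1 h) [1] []

theorem gI_6_4 (h : OriRel a b c d) :
    wrd a b c d [1, 0, 1, 3, 2, 1, 0, 1] = wrd a b c d [1, 0, 1] := by
  calc wrd a b c d [1, 0, 1, 3, 2, 1, 0, 1]
      = wrd a b c d [1, 0, 1, 2, 0, 1] := wstep a b c d (gI_2_4 h) [1, 0] [0, 1]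
    _ = wrd a b c d [1, 0, 1] := wstep a b c d (gI_3_1 h) [1] []

theorem gI_6_5 (h : OriRel a b c d) :
    wrd a b c d [1, 0, 1, 2, 3, 2, 1, 0, 1] = wrd a b c d [1, 0, 1] := by
  calc wrd a b c d [1, 0, 1, 2, 3, 2, 1, 0, 1]
      = wrd a b c d [1, 0, 1, 2, 0, 1] := wstep a b c d (gI_2_5 h) [1, 0] [0, 1]
    _ = wrd a b c d [1, 0, 1] := wstep a b c d (gI_3_1 h) [1] []

theorem gI_6_6 (h : OriRel a b c d) :
    wrd a b c d [1, 0, 1, 3, 2, 3, 1, 0, 1] = wrd a b c d [1, 0, 1] := by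
  calc wrd a b c d [1, 0, 1, 3, 2, 3, 1, 0, 1]
      = wrd a b c d [1, 0, 1, 2, 0, 1] := wstep a b c d (gI_2_6 h) [1, 0] [0, 1]
    _ = wrd a b c d [1, 0, 1] := wstep a b c d (gI_3_1 h) [1] []

theorem gII_1_0_0 (h : OriRel a b c d) :
    wrd a b c d [0, 0] = wrd a b c d [0] := by
  calc wrd a b c d [0, 0]
      = wrd a b c d [0] := wstep a b c d (h.w_raa) [] []

theorem gII_1_0_1 (h : OriRel a b c d) :
    wrd a b c d [0, 1] = wrd a b c d [0, 1] := by
  rfl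

theorem gII_1_1_0 (h : OriRel a b c d) :
    wrd a b c d [0, 2, 0] = wrd a b c d [0] := by
  calc wrd a b c d [0, 2, 0]
      = wrd a b c d [0] := wstep a b c d (h.w_rjaca) [] []

theorem gII_1_1_1 (h : OriRel a b c d) :
    wrd a b c d [0, 2, 1] = wrd a b c d [0, 1, 2] := by
  calc wrd a b c d [0, 2, 1]
      = wrd a b c d [0, 1, 2] := wstep a b c d (h.w_rbc).symm [0] []

theorem gII_1_2_0 (h : OriRel a b c d) :
    wrd a b c d [0, 3, 0] = wrd a b c d [0, 3] := by
  calc wrd a b c d [0, 3, 0]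
      = wrd a b c d [0, 3] := wstep a b c d (gI_1_2 h) [] []

theorem gII_1_2_1 (h : OriRel a b c d) :
    wrd a b c d [0, 3, 1] = wrd a b c d [3, 0, 1] := by
  calc wrd a b c d [0, 3, 1]
      = wrd a b c d [3, 0, 1] := wstep a b c d (h.w_rad) [] [1]

theorem gII_1_3_0 (h : OriRel a b c d) :
    wrd a b c d [0, 2, 3, 0] = wrd a b c d [0, 3] := by
  calc wrd a b c d [0, 2, 3, 0]
      = wrd a b c d [0, 3] := wstep a b c d (gI_1_3 h) [] []

theorem gII_1_3_1 (h : OriRel a b c d) :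
    wrd a b c d [0, 2, 3, 1] = wrd a b c d [3, 0, 1, 2] := by
  calc wrd a b c d [0, 2, 3, 1]
      = wrd a b c d [0, 2, 3, 0, 1, 2, 3, 1] := wstep a b c d (h.w_rjcd).symm [0] [1]
    _ = wrd a b c d [0, 2, 3, 0, 1, 2] := wstep a b c d (gI_2_3 h) [0, 2, 3, 0] []
    _ = wrd a b c d [0, 3, 1, 2] := wstep a b c d (gI_1_3 h) [] [1, 2]
    _ = wrd a b c d [3, 0, 1, 2] := wstep a b c d (h.w_rad) [] [1, 2]

theorem gII_1_4_0 (h : OriRel a b c d) :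
    wrd a b c d [0, 3, 2, 0] = wrd a b c d [0, 3] := by
  calc wrd a b c d [0, 3, 2, 0]
      = wrd a b c d [0, 3] := wstep a b c d (gI_1_4 h) [] []

theorem gII_1_4_1 (h : OriRel a b c d) :
    wrd a b c d [0, 3, 2, 1] = wrd a b c d [3, 0, 1, 2] := by
  calc wrd a b c d [0, 3, 2, 1]
      = wrd a b c d [0, 3, 1, 2] := wstep a b c d (h.w_rbc).symm [0, 3] []
    _ = wrd a b c d [3, 0, 1, 2] := wstep a b c d (h.w_rad) [] [1, 2]

theorem gII_1_5_0 (h : OriRel a b c d) :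
    wrd a b c d [0, 2, 3, 2, 0] = wrd a b c d [0, 3] := by
  calc wrd a b c d [0, 2, 3, 2, 0]
      = wrd a b c d [0, 3] := wstep a b c d (gI_1_5 h) [] []

theorem gII_1_5_1 (h : OriRel a b c d) :
    wrd a b c d [0, 2, 3, 2, 1] = wrd a b c d [3, 0, 1, 2] := by
  calc wrd a b c d [0, 2, 3, 2, 1]
      = wrd a b c d [0, 2, 3, 1, 2] := wstep a b c d (h.w_rbc).symm [0, 2, 3] []
    _ = wrd a b c d [3, 0, 1, 2, 2] := wstep a b c d (gII_1_3_1 h) [] [2]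
    _ = wrd a b c d [3, 0, 1, 2] := wstep a b c d (h.w_rcc) [3, 0, 1] []

theorem gII_1_6_0 (h : OriRel a b c d) :
    wrd a b c d [0, 3, 2, 3, 0] = wrd a b c d [0, 3] := by
  calc wrd a b c d [0, 3, 2, 3, 0]
      = wrd a b c d [0, 3] := wstep a b c d (gI_1_6 h) [] []

theorem gII_1_6_1 (h : OriRel a b c d) :
    wrd a b c d [0, 3, 2, 3, 1] = wrd a b c d [3, 0, 1, 2] := by
  calc wrd a b c d [0, 3, 2, 3, 1]
      = wrd a b c d [3, 0, 2, 3, 1] := wstep a b c d (h.w_rad) [] [2, 3, 1]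
    _ = wrd a b c d [3, 3, 0, 1, 2] := wstep a b c d (gII_1_3_1 h) [3] []
    _ = wrd a b c d [3, 0, 1, 2] := wstep a b c d (h.w_rdd) [] [0, 1, 2]

theorem gII_2_0_0 (h : OriRel a b c d) :
    wrd a b c d [1, 0] = wrd a b c d [1, 0] := by
  rfl

theorem gII_2_0_1 (h : OriRel a b c d) :
    wrd a b c d [1, 1] = wrd a b c d [1] := by
  calc wrd a b c d [1, 1]
      = wrd a b c d [1] := wstep a b c d (h.w_rbb) [] []

theorem gII_2_1_0 (h : OriRel a b c d) :
    wrd a b c d [1, 2, 0] = wrd a b c d [2, 1, 0] := by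
  calc wrd a b c d [1, 2, 0]
      = wrd a b c d [2, 1, 0] := wstep a b c d (h.w_rbc) [] [0]

theorem gII_2_1_1 (h : OriRel a b c d) :
    wrd a b c d [1, 2, 1] = wrd a b c d [1, 2] := by
  calc wrd a b c d [1, 2, 1]
      = wrd a b c d [1, 2] := wstep a b c d (gI_2_1 h) [] []

theorem gII_2_2_0 (h : OriRel a b c d) :
    wrd a b c d [1, 3, 0] = wrd a b c d [1, 0, 3] := by
  calc wrd a b c d [1, 3, 0]
      = wrd a b c d [1, 0, 3] := wstep a b c d (h.w_rad).symm [1] []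

theorem gII_2_2_1 (h : OriRel a b c d) :
    wrd a b c d [1, 3, 1] = wrd a b c d [1] := by
  calc wrd a b c d [1, 3, 1]
      = wrd a b c d [1] := wstep a b c d (h.w_rjbdb) [] []

theorem gII_2_3_0 (h : OriRel a b c d) :
    wrd a b c d [1, 2, 3, 0] = wrd a b c d [2, 1, 0, 3] := by
  calc wrd a b c d [1, 2, 3, 0]
      = wrd a b c d [2, 1, 3, 0] := wstep a b c d (h.w_rbc) [] [3, 0]
    _ = wrd a b c d [2, 1, 0, 3] := wstep a b c d (h.w_rad).symm [2, 1] []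

theorem gII_2_3_1 (h : OriRel a b c d) :
    wrd a b c d [1, 2, 3, 1] = wrd a b c d [1, 2] := by
  calc wrd a b c d [1, 2, 3, 1]
      = wrd a b c d [1, 2] := wstep a b c d (gI_2_3 h) [] []

theorem gII_2_4_0 (h : OriRel a b c d) :
    wrd a b c d [1, 3, 2, 0] = wrd a b c d [2, 1, 0, 3] := by
  calc wrd a b c d [1, 3, 2, 0]
      = wrd a b c d [1, 3, 2, 1, 0, 3, 2, 0] := wstep a b c d (h.w_rjdc).symm [1] [0]
    _ = wrd a b c d [1, 2, 0, 3, 2, 0] := wstep a b c d (gI_2_4 h) [] [0, 3, 2, 0]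
    _ = wrd a b c d [1, 2, 0, 3] := wstep a b c d (gI_1_4 h) [1, 2] []
    _ = wrd a b c d [2, 1, 0, 3] := wstep a b c d (h.w_rbc) [] [0, 3]

theorem gII_2_4_1 (h : OriRel a b c d) :
    wrd a b c d [1, 3, 2, 1] = wrd a b c d [1, 2] := by
  calc wrd a b c d [1, 3, 2, 1]
      = wrd a b c d [1, 2] := wstep a b c d (gI_2_4 h) [] []

theorem gII_2_5_0 (h : OriRel a b c d) :
    wrd a b c d [1, 2, 3, 2, 0] = wrd a b c d [2, 1, 0, 3] := by
  calc wrd a b c d [1, 2, 3, 2, 0]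
      = wrd a b c d [2, 1, 3, 2, 0] := wstep a b c d (h.w_rbc) [] [3, 2, 0]
    _ = wrd a b c d [2, 2, 1, 0, 3] := wstep a b c d (gII_2_4_0 h) [2] []
    _ = wrd a b c d [2, 1, 0, 3] := wstep a b c d (h.w_rcc) [] [1, 0, 3]

theorem gII_2_5_1 (h : OriRel a b c d) :
    wrd a b c d [1, 2, 3, 2, 1] = wrd a b c d [1, 2] := by
  calc wrd a b c d [1, 2, 3, 2, 1]
      = wrd a b c d [1, 2] := wstep a b c d (gI_2_5 h) [] []

theorem gII_2_6_0 (h : OriRel a b c d) :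
    wrd a b c d [1, 3, 2, 3, 0] = wrd a b c d [2, 1, 0, 3] := by
  calc wrd a b c d [1, 3, 2, 3, 0]
      = wrd a b c d [1, 3, 2, 0, 3] := wstep a b c d (h.w_rad).symm [1, 3, 2] []
    _ = wrd a b c d [2, 1, 0, 3, 3] := wstep a b c d (gII_2_4_0 h) [] [3]
    _ = wrd a b c d [2, 1, 0, 3] := wstep a b c d (h.w_rdd) [2, 1, 0] []

theorem gII_2_6_1 (h : OriRel a b c d) :
    wrd a b c d [1, 3, 2, 3, 1] = wrd a b c d [1, 2] := by
  calc wrd a b c d [1, 3, 2, 3, 1]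
      = wrd a b c d [1, 2] := wstep a b c d (gI_2_6 h) [] []

theorem gII_3_0_0 (h : OriRel a b c d) :
    wrd a b c d [0, 1, 0] = wrd a b c d [0, 1, 0] := by
  rfl

theorem gII_3_0_1 (h : OriRel a b c d) :
    wrd a b c d [0, 1, 1] = wrd a b c d [0, 1] := by
  calc wrd a b c d [0, 1, 1]
      = wrd a b c d [0, 1] := wstep a b c d (h.w_rbb) [0] []

theorem gII_3_1_0 (h : OriRel a b c d) :
    wrd a b c d [0, 1, 2, 0] = wrd a b c d [0, 1, 0] := by
  calc wrd a b c d [0, 1, 2, 0]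
      = wrd a b c d [0, 1, 0, 1, 2, 0] := wstep a b c d (h.w_riab).symm [] [2, 0]
    _ = wrd a b c d [0, 1, 0, 2, 1, 0] := wstep a b c d (h.w_rbc) [0, 1, 0] [0]
    _ = wrd a b c d [0, 1, 0] := wstep a b c d (gI_4_1 h) [0] []

theorem gII_3_1_1 (h : OriRel a b c d) :
    wrd a b c d [0, 1, 2, 1] = wrd a b c d [0, 1, 2] := by
  calc wrd a b c d [0, 1, 2, 1]
      = wrd a b c d [0, 1, 2] := wstep a b c d (gI_2_1 h) [0] []

theorem gII_3_2_0 (h : OriRel a b c d) :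
    wrd a b c d [0, 1, 3, 0] = wrd a b c d [0, 1, 0, 3] := by
  calc wrd a b c d [0, 1, 3, 0]
      = wrd a b c d [0, 1, 0, 3] := wstep a b c d (h.w_rad).symm [0, 1] []

theorem gII_3_2_1 (h : OriRel a b c d) :
    wrd a b c d [0, 1, 3, 1] = wrd a b c d [0, 1] := by
  calc wrd a b c d [0, 1, 3, 1]
      = wrd a b c d [0, 1] := wstep a b c d (h.w_rjbdb) [0] []

theorem gII_3_3_0 (h : OriRel a b c d) :
    wrd a b c d [0, 1, 2, 3, 0] = wrd a b c d [0, 1, 0, 3] := by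
  calc wrd a b c d [0, 1, 2, 3, 0]
      = wrd a b c d [0, 1, 2, 0, 3] := wstep a b c d (h.w_rad).symm [0, 1, 2] []
    _ = wrd a b c d [0, 1, 0, 3] := wstep a b c d (gII_3_1_0 h) [] [3]

theorem gII_3_3_1 (h : OriRel a b c d) :
    wrd a b c d [0, 1, 2, 3, 1] = wrd a b c d [0, 1, 2] := by
  calc wrd a b c d [0, 1, 2, 3, 1]
      = wrd a b c d [0, 1, 2] := wstep a b c d (gI_2_3 h) [0] []

theorem gII_3_4_0 (h : OriRel a b c d) :
    wrd a b c d [0, 1, 3, 2, 0] = wrd a b c d [0, 1, 0, 3] := by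
  calc wrd a b c d [0, 1, 3, 2, 0]
      = wrd a b c d [0, 2, 1, 0, 3] := wstep a b c d (gII_2_4_0 h) [0] []
    _ = wrd a b c d [0, 1, 2, 0, 3] := wstep a b c d (h.w_rbc).symm [0] [0, 3]
    _ = wrd a b c d [0, 1, 0, 3] := wstep a b c d (gII_3_1_0 h) [] [3]

theorem gII_3_4_1 (h : OriRel a b c d) :
    wrd a b c d [0, 1, 3, 2, 1] = wrd a b c d [0, 1, 2] := by
  calc wrd a b c d [0, 1, 3, 2, 1]
      = wrd a b c d [0, 1, 2] := wstep a b c d (gI_2_4 h) [0] []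

theorem gII_3_5_0 (h : OriRel a b c d) :
    wrd a b c d [0, 1, 2, 3, 2, 0] = wrd a b c d [0, 1, 0, 3] := by
  calc wrd a b c d [0, 1, 2, 3, 2, 0]
      = wrd a b c d [0, 2, 1, 0, 3] := wstep a b c d (gII_2_5_0 h) [0] []
    _ = wrd a b c d [0, 1, 2, 0, 3] := wstep a b c d (h.w_rbc).symm [0] [0, 3]
    _ = wrd a b c d [0, 1, 0, 3] := wstep a b c d (gII_3_1_0 h) [] [3]

theorem gII_3_5_1 (h : OriRel a b c d) :
    wrd a b c d [0, 1, 2, 3, 2, 1] = wrd a b c d [0, 1, 2] := by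
  calc wrd a b c d [0, 1, 2, 3, 2, 1]
      = wrd a b c d [0, 1, 2] := wstep a b c d (gI_2_5 h) [0] []

theorem gII_3_6_0 (h : OriRel a b c d) :
    wrd a b c d [0, 1, 3, 2, 3, 0] = wrd a b c d [0, 1, 0, 3] := by
  calc wrd a b c d [0, 1, 3, 2, 3, 0]
      = wrd a b c d [0, 1, 3, 2, 0, 3] := wstep a b c d (h.w_rad).symm [0, 1, 3, 2] []
    _ = wrd a b c d [0, 1, 0, 3, 3] := wstep a b c d (gII_3_4_0 h) [] [3]
    _ = wrd a b c d [0, 1, 0, 3] := wstep a b c d (h.w_rdd) [0, 1, 0] []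

theorem gII_3_6_1 (h : OriRel a b c d) :
    wrd a b c d [0, 1, 3, 2, 3, 1] = wrd a b c d [0, 1, 2] := by
  calc wrd a b c d [0, 1, 3, 2, 3, 1]
      = wrd a b c d [0, 1, 2] := wstep a b c d (gI_2_6 h) [0] []

theorem gII_4_0_0 (h : OriRel a b c d) :
    wrd a b c d [1, 0, 0] = wrd a b c d [1, 0] := by
  calc wrd a b c d [1, 0, 0]
      = wrd a b c d [1, 0] := wstep a b c d (h.w_raa) [1] []

theorem gII_4_0_1 (h : OriRel a b c d) :
    wrd a b c d [1, 0, 1] = wrd a b c d [1, 0, 1] := by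
  rfl

theorem gII_4_1_0 (h : OriRel a b c d) :
    wrd a b c d [1, 0, 2, 0] = wrd a b c d [1, 0] := by
  calc wrd a b c d [1, 0, 2, 0]
      = wrd a b c d [1, 0] := wstep a b c d (h.w_rjaca) [1] []

theorem gII_4_1_1 (h : OriRel a b c d) :
    wrd a b c d [1, 0, 2, 1] = wrd a b c d [1, 0, 1, 2] := by
  calc wrd a b c d [1, 0, 2, 1]
      = wrd a b c d [1, 0, 1, 2] := wstep a b c d (h.w_rbc).symm [1, 0] []

theorem gII_4_2_0 (h : OriRel a b c d) :
    wrd a b c d [1, 0, 3, 0] = wrd a b c d [1, 0, 3] := by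
  calc wrd a b c d [1, 0, 3, 0]
      = wrd a b c d [1, 0, 3] := wstep a b c d (gI_1_2 h) [1] []

theorem gII_4_2_1 (h : OriRel a b c d) :
    wrd a b c d [1, 0, 3, 1] = wrd a b c d [1, 0, 1] := by
  calc wrd a b c d [1, 0, 3, 1]
      = wrd a b c d [1, 0, 1, 0, 3, 1] := wstep a b c d (h.w_riba).symm [] [3, 1]
    _ = wrd a b c d [1, 0, 1, 3, 0, 1] := wstep a b c d (h.w_rad) [1, 0, 1] [1]
    _ = wrd a b c d [1, 0, 1] := wstep a b c d (gI_3_2 h) [1] []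

theorem gII_4_3_0 (h : OriRel a b c d) :
    wrd a b c d [1, 0, 2, 3, 0] = wrd a b c d [1, 0, 3] := by
  calc wrd a b c d [1, 0, 2, 3, 0]
      = wrd a b c d [1, 0, 3] := wstep a b c d (gI_1_3 h) [1] []

theorem gII_4_3_1 (h : OriRel a b c d) :
    wrd a b c d [1, 0, 2, 3, 1] = wrd a b c d [1, 0, 1, 2] := by
  calc wrd a b c d [1, 0, 2, 3, 1]
      = wrd a b c d [1, 3, 0, 1, 2] := wstep a b c d (gII_1_3_1 h) [1] []
    _ = wrd a b c d [1, 0, 3, 1, 2] := wstep a b c d (h.w_rad).symm [1] [1, 2]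
    _ = wrd a b c d [1, 0, 1, 2] := wstep a b c d (gII_4_2_1 h) [] [2]

theorem gII_4_4_0 (h : OriRel a b c d) :
    wrd a b c d [1, 0, 3, 2, 0] = wrd a b c d [1, 0, 3] := by
  calc wrd a b c d [1, 0, 3, 2, 0]
      = wrd a b c d [1, 0, 3] := wstep a b c d (gI_1_4 h) [1] []

theorem gII_4_4_1 (h : OriRel a b c d) :
    wrd a b c d [1, 0, 3, 2, 1] = wrd a b c d [1, 0, 1, 2] := by
  calc wrd a b c d [1, 0, 3, 2, 1]
      = wrd a b c d [1, 0, 3, 1, 2] := wstep a b c d (h.w_rbc).symm [1, 0, 3] []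
    _ = wrd a b c d [1, 0, 1, 2] := wstep a b c d (gII_4_2_1 h) [] [2]

theorem gII_4_5_0 (h : OriRel a b c d) :
    wrd a b c d [1, 0, 2, 3, 2, 0] = wrd a b c d [1, 0, 3] := by
  calc wrd a b c d [1, 0, 2, 3, 2, 0]
      = wrd a b c d [1, 0, 3] := wstep a b c d (gI_1_5 h) [1] []

theorem gII_4_5_1 (h : OriRel a b c d) :
    wrd a b c d [1, 0, 2, 3, 2, 1] = wrd a b c d [1, 0, 1, 2] := by
  calc wrd a b c d [1, 0, 2, 3, 2, 1]
      = wrd a b c d [1, 0, 2, 3, 1, 2] := wstep a b c d (h.w_rbc).symm [1, 0, 2, 3] []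
    _ = wrd a b c d [1, 0, 1, 2, 2] := wstep a b c d (gII_4_3_1 h) [] [2]
    _ = wrd a b c d [1, 0, 1, 2] := wstep a b c d (h.w_rcc) [1, 0, 1] []

theorem gII_4_6_0 (h : OriRel a b c d) :
    wrd a b c d [1, 0, 3, 2, 3, 0] = wrd a b c d [1, 0, 3] := by
  calc wrd a b c d [1, 0, 3, 2, 3, 0]
      = wrd a b c d [1, 0, 3] := wstep a b c d (gI_1_6 h) [1] []

theorem gII_4_6_1 (h : OriRel a b c d) :
    wrd a b c d [1, 0, 3, 2, 3, 1] = wrd a b c d [1, 0, 1, 2] := by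
  calc wrd a b c d [1, 0, 3, 2, 3, 1]
      = wrd a b c d [1, 3, 0, 1, 2] := wstep a b c d (gII_1_6_1 h) [1] []
    _ = wrd a b c d [1, 0, 3, 1, 2] := wstep a b c d (h.w_rad).symm [1] [1, 2]
    _ = wrd a b c d [1, 0, 1, 2] := wstep a b c d (gII_4_2_1 h) [] [2]

theorem gII_5_0_0 (h : OriRel a b c d) :
    wrd a b c d [0, 1, 0, 0] = wrd a b c d [0, 1, 0] := by
  calc wrd a b c d [0, 1, 0, 0]
      = wrd a b c d [0, 1, 0] := wstep a b c d (h.w_raa) [0, 1] []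

theorem gII_5_0_1 (h : OriRel a b c d) :
    wrd a b c d [0, 1, 0, 1] = wrd a b c d [0, 1] := by
  calc wrd a b c d [0, 1, 0, 1]
      = wrd a b c d [0, 1] := wstep a b c d (h.w_riab) [] []

theorem gII_5_1_0 (h : OriRel a b c d) :
    wrd a b c d [0, 1, 0, 2, 0] = wrd a b c d [0, 1, 0] := by
  calc wrd a b c d [0, 1, 0, 2, 0]
      = wrd a b c d [0, 1, 0] := wstep a b c d (h.w_rjaca) [0, 1] []

theorem gII_5_1_1 (h : OriRel a b c d) :
    wrd a b c d [0, 1, 0, 2, 1] = wrd a b c d [0, 1, 2] := by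
  calc wrd a b c d [0, 1, 0, 2, 1]
      = wrd a b c d [0, 1, 0, 1, 2] := wstep a b c d (h.w_rbc).symm [0, 1, 0] []
    _ = wrd a b c d [0, 1, 2] := wstep a b c d (h.w_riab) [] [2]

theorem gII_5_2_0 (h : OriRel a b c d) :
    wrd a b c d [0, 1, 0, 3, 0] = wrd a b c d [0, 1, 0, 3] := by
  calc wrd a b c d [0, 1, 0, 3, 0]
      = wrd a b c d [0, 1, 0, 3] := wstep a b c d (gI_1_2 h) [0, 1] []

theorem gII_5_2_1 (h : OriRel a b c d) :
    wrd a b c d [0, 1, 0, 3, 1] = wrd a b c d [0, 1] := by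
  calc wrd a b c d [0, 1, 0, 3, 1]
      = wrd a b c d [0, 1, 0, 1] := wstep a b c d (gII_4_2_1 h) [0] []
    _ = wrd a b c d [0, 1] := wstep a b c d (h.w_riab) [] []

theorem gII_5_3_0 (h : OriRel a b c d) :
    wrd a b c d [0, 1, 0, 2, 3, 0] = wrd a b c d [0, 1, 0, 3] := by
  calc wrd a b c d [0, 1, 0, 2, 3, 0]
      = wrd a b c d [0, 1, 0, 3] := wstep a b c d (gI_1_3 h) [0, 1] []

theorem gII_5_3_1 (h : OriRel a b c d) :
    wrd a b c d [0, 1, 0, 2, 3, 1] = wrd a b c d [0, 1, 2] := by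
  calc wrd a b c d [0, 1, 0, 2, 3, 1]
      = wrd a b c d [0, 1, 0, 1, 2] := wstep a b c d (gII_4_3_1 h) [0] []
    _ = wrd a b c d [0, 1, 2] := wstep a b c d (h.w_riab) [] [2]

theorem gII_5_4_0 (h : OriRel a b c d) :
    wrd a b c d [0, 1, 0, 3, 2, 0] = wrd a b c d [0, 1, 0, 3] := by
  calc wrd a b c d [0, 1, 0, 3, 2, 0]
      = wrd a b c d [0, 1, 0, 3] := wstep a b c d (gI_1_4 h) [0, 1] []

theorem gII_5_4_1 (h : OriRel a b c d) :
    wrd a b c d [0, 1, 0, 3, 2, 1] = wrd a b c d [0, 1, 2] := by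
  calc wrd a b c d [0, 1, 0, 3, 2, 1]
      = wrd a b c d [0, 1, 0, 1, 2] := wstep a b c d (gII_4_4_1 h) [0] []
    _ = wrd a b c d [0, 1, 2] := wstep a b c d (h.w_riab) [] [2]

theorem gII_5_5_0 (h : OriRel a b c d) :
    wrd a b c d [0, 1, 0, 2, 3, 2, 0] = wrd a b c d [0, 1, 0, 3] := by
  calc wrd a b c d [0, 1, 0, 2, 3, 2, 0]
      = wrd a b c d [0, 1, 0, 3] := wstep a b c d (gI_1_5 h) [0, 1] []

theorem gII_5_5_1 (h : OriRel a b c d) :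
    wrd a b c d [0, 1, 0, 2, 3, 2, 1] = wrd a b c d [0, 1, 2] := by
  calc wrd a b c d [0, 1, 0, 2, 3, 2, 1]
      = wrd a b c d [0, 1, 0, 1, 2] := wstep a b c d (gII_4_5_1 h) [0] []
    _ = wrd a b c d [0, 1, 2] := wstep a b c d (h.w_riab) [] [2]

theorem gII_5_6_0 (h : OriRel a b c d) :
    wrd a b c d [0, 1, 0, 3, 2, 3, 0] = wrd a b c d [0, 1, 0, 3] := by
  calc wrd a b c d [0, 1, 0, 3, 2, 3, 0]
      = wrd a b c d [0, 1, 0, 3] := wstep a b c d (gI_1_6 h) [0, 1] []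

theorem gII_5_6_1 (h : OriRel a b c d) :
    wrd a b c d [0, 1, 0, 3, 2, 3, 1] = wrd a b c d [0, 1, 2] := by
  calc wrd a b c d [0, 1, 0, 3, 2, 3, 1]
      = wrd a b c d [0, 1, 0, 1, 2] := wstep a b c d (gII_4_6_1 h) [0] []
    _ = wrd a b c d [0, 1, 2] := wstep a b c d (h.w_riab) [] [2]

theorem gII_6_0_0 (h : OriRel a b c d) :
    wrd a b c d [1, 0, 1, 0] = wrd a b c d [1, 0] := by
  calc wrd a b c d [1, 0, 1, 0]
      = wrd a b c d [1, 0] := wstep a b c d (h.w_riba) [] []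

theorem gII_6_0_1 (h : OriRel a b c d) :
    wrd a b c d [1, 0, 1, 1] = wrd a b c d [1, 0, 1] := by
  calc wrd a b c d [1, 0, 1, 1]
      = wrd a b c d [1, 0, 1] := wstep a b c d (h.w_rbb) [1, 0] []

theorem gII_6_1_0 (h : OriRel a b c d) :
    wrd a b c d [1, 0, 1, 2, 0] = wrd a b c d [1, 0] := by
  calc wrd a b c d [1, 0, 1, 2, 0]
      = wrd a b c d [1, 0, 1, 0] := wstep a b c d (gII_3_1_0 h) [1] []
    _ = wrd a b c d [1, 0] := wstep a b c d (h.w_riba) [] []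

theorem gII_6_1_1 (h : OriRel a b c d) :
    wrd a b c d [1, 0, 1, 2, 1] = wrd a b c d [1, 0, 1, 2] := by
  calc wrd a b c d [1, 0, 1, 2, 1]
      = wrd a b c d [1, 0, 1, 2] := wstep a b c d (gI_2_1 h) [1, 0] []

theorem gII_6_2_0 (h : OriRel a b c d) :
    wrd a b c d [1, 0, 1, 3, 0] = wrd a b c d [1, 0, 3] := by
  calc wrd a b c d [1, 0, 1, 3, 0]
      = wrd a b c d [1, 0, 1, 0, 3] := wstep a b c d (h.w_rad).symm [1, 0, 1] []
    _ = wrd a b c d [1, 0, 3] := wstep a b c d (h.w_riba) [] [3]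

theorem gII_6_2_1 (h : OriRel a b c d) :
    wrd a b c d [1, 0, 1, 3, 1] = wrd a b c d [1, 0, 1] := by
  calc wrd a b c d [1, 0, 1, 3, 1]
      = wrd a b c d [1, 0, 1] := wstep a b c d (h.w_rjbdb) [1, 0] []

theorem gII_6_3_0 (h : OriRel a b c d) :
    wrd a b c d [1, 0, 1, 2, 3, 0] = wrd a b c d [1, 0, 3] := by
  calc wrd a b c d [1, 0, 1, 2, 3, 0]
      = wrd a b c d [1, 0, 1, 2, 0, 3] := wstep a b c d (h.w_rad).symm [1, 0, 1, 2] []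
    _ = wrd a b c d [1, 0, 3] := wstep a b c d (gII_6_1_0 h) [] [3]

theorem gII_6_3_1 (h : OriRel a b c d) :
    wrd a b c d [1, 0, 1, 2, 3, 1] = wrd a b c d [1, 0, 1, 2] := by
  calc wrd a b c d [1, 0, 1, 2, 3, 1]
      = wrd a b c d [1, 0, 1, 2] := wstep a b c d (gI_2_3 h) [1, 0] []

theorem gII_6_4_0 (h : OriRel a b c d) :
    wrd a b c d [1, 0, 1, 3, 2, 0] = wrd a b c d [1, 0, 3] := by
  calc wrd a b c d [1, 0, 1, 3, 2, 0]
      = wrd a b c d [1, 0, 2, 1, 0, 3] := wstep a b c d (gII_2_4_0 h) [1, 0] []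
    _ = wrd a b c d [1, 0, 3] := wstep a b c d (gI_4_1 h) [] [3]

theorem gII_6_4_1 (h : OriRel a b c d) :
    wrd a b c d [1, 0, 1, 3, 2, 1] = wrd a b c d [1, 0, 1, 2] := by
  calc wrd a b c d [1, 0, 1, 3, 2, 1]
      = wrd a b c d [1, 0, 1, 2] := wstep a b c d (gI_2_4 h) [1, 0] []

theorem gII_6_5_0 (h : OriRel a b c d) :
    wrd a b c d [1, 0, 1, 2, 3, 2, 0] = wrd a b c d [1, 0, 3] := by
  calc wrd a b c d [1, 0, 1, 2, 3, 2, 0]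
      = wrd a b c d [1, 0, 1, 0, 3] := wstep a b c d (gII_3_5_0 h) [1] []
    _ = wrd a b c d [1, 0, 3] := wstep a b c d (h.w_riba) [] [3]

theorem gII_6_5_1 (h : OriRel a b c d) :
    wrd a b c d [1, 0, 1, 2, 3, 2, 1] = wrd a b c d [1, 0, 1, 2] := by
  calc wrd a b c d [1, 0, 1, 2, 3, 2, 1]
      = wrd a b c d [1, 0, 1, 2] := wstep a b c d (gI_2_5 h) [1, 0] []

theorem gII_6_6_0 (h : OriRel a b c d) :
    wrd a b c d [1, 0, 1, 3, 2, 3, 0] = wrd a b c d [1, 0, 3] := by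
  calc wrd a b c d [1, 0, 1, 3, 2, 3, 0]
      = wrd a b c d [1, 0, 1, 3, 2, 0, 3] := wstep a b c d (h.w_rad).symm [1, 0, 1, 3, 2] []
    _ = wrd a b c d [1, 0, 3, 3] := wstep a b c d (gII_6_4_0 h) [] [3]
    _ = wrd a b c d [1, 0, 3] := wstep a b c d (h.w_rdd) [1, 0] []

theorem gII_6_6_1 (h : OriRel a b c d) :
    wrd a b c d [1, 0, 1, 3, 2, 3, 1] = wrd a b c d [1, 0, 1, 2] := by
  calc wrd a b c d [1, 0, 1, 3, 2, 3, 1]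
      = wrd a b c d [1, 0, 1, 2] := wstep a b c d (gI_2_6 h) [1, 0] []

theorem mTT (h : OriTop a b) (c d : M) :
    ∀ tc : Fin 7, wrd a b c d (clw tc ++ clw tc) = wrd a b c d (clw tc)
  | 0 => gpTT_0 h c d
  | 1 => gpTT_1 h c d
  | 2 => gpTT_2 h c d
  | 3 => gpTT_3 h c d
  | 4 => gpTT_4 h c d
  | 5 => gpTT_5 h c d
  | 6 => gpTT_6 h c d

theorem mT (h : OriTop a b) (c d : M) :
    ∀ tc : Fin 7, ∀ g : Fin 2, ∃ tc' : Fin 7,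
      wrd a b c d (clw tc ++ clw (gcl g)) = wrd a b c d (clw tc')
  | 0, 0 => ⟨1, gpT_0_0 h c d⟩
  | 0, 1 => ⟨2, gpT_0_1 h c d⟩
  | 1, 0 => ⟨1, gpT_1_0 h c d⟩
  | 1, 1 => ⟨3, gpT_1_1 h c d⟩
  | 2, 0 => ⟨4, gpT_2_0 h c d⟩
  | 2, 1 => ⟨2, gpT_2_1 h c d⟩
  | 3, 0 => ⟨5, gpT_3_0 h c d⟩
  | 3, 1 => ⟨3, gpT_3_1 h c d⟩
  | 4, 0 => ⟨4, gpT_4_0 h c d⟩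
  | 4, 1 => ⟨6, gpT_4_1 h c d⟩
  | 5, 0 => ⟨5, gpT_5_0 h c d⟩
  | 5, 1 => ⟨3, gpT_5_1 h c d⟩
  | 6, 0 => ⟨4, gpT_6_0 h c d⟩
  | 6, 1 => ⟨6, gpT_6_1 h c d⟩

theorem mI (h : OriRel a b c d) :
    ∀ tc sc : Fin 7, tc ≠ 0 → ∃ sg : Fin 7,
      wrd a b c d (clw tc ++ clwLow sc ++ clw tc) = wrd a b c d (clw tc ++ clwLow sg)
  | 0, _, h0 => absurd rfl h0
  | 1, 0, _ => ⟨0, gI_1_0 h⟩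
  | 1, 1, _ => ⟨0, gI_1_1 h⟩
  | 1, 2, _ => ⟨2, gI_1_2 h⟩
  | 1, 3, _ => ⟨2, gI_1_3 h⟩
  | 1, 4, _ => ⟨2, gI_1_4 h⟩
  | 1, 5, _ => ⟨2, gI_1_5 h⟩
  | 1, 6, _ => ⟨2, gI_1_6 h⟩
  | 2, 0, _ => ⟨0, gI_2_0 h⟩
  | 2, 1, _ => ⟨1, gI_2_1 h⟩
  | 2, 2, _ => ⟨0, gI_2_2 h⟩
  | 2, 3, _ => ⟨1, gI_2_3 h⟩
  | 2, 4, _ => ⟨1, gI_2_4 h⟩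
  | 2, 5, _ => ⟨1, gI_2_5 h⟩
  | 2, 6, _ => ⟨1, gI_2_6 h⟩
  | 3, 0, _ => ⟨0, gI_3_0 h⟩
  | 3, 1, _ => ⟨0, gI_3_1 h⟩
  | 3, 2, _ => ⟨0, gI_3_2 h⟩
  | 3, 3, _ => ⟨0, gI_3_3 h⟩
  | 3, 4, _ => ⟨0, gI_3_4 h⟩
  | 3, 5, _ => ⟨0, gI_3_5 h⟩
  | 3, 6, _ => ⟨0, gI_3_6 h⟩
  | 4, 0, _ => ⟨0, gI_4_0 h⟩
  | 4, 1, _ => ⟨0, gI_4_1 h⟩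
  | 4, 2, _ => ⟨0, gI_4_2 h⟩
  | 4, 3, _ => ⟨0, gI_4_3 h⟩
  | 4, 4, _ => ⟨0, gI_4_4 h⟩
  | 4, 5, _ => ⟨0, gI_4_5 h⟩
  | 4, 6, _ => ⟨0, gI_4_6 h⟩
  | 5, 0, _ => ⟨0, gI_5_0 h⟩
  | 5, 1, _ => ⟨0, gI_5_1 h⟩
  | 5, 2, _ => ⟨0, gI_5_2 h⟩
  | 5, 3, _ => ⟨0, gI_5_3 h⟩
  | 5, 4, _ => ⟨0, gI_5_4 h⟩
  | 5, 5, _ => ⟨0, gI_5_5 h⟩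
  | 5, 6, _ => ⟨0, gI_5_6 h⟩
  | 6, 0, _ => ⟨0, gI_6_0 h⟩
  | 6, 1, _ => ⟨0, gI_6_1 h⟩
  | 6, 2, _ => ⟨0, gI_6_2 h⟩
  | 6, 3, _ => ⟨0, gI_6_3 h⟩
  | 6, 4, _ => ⟨0, gI_6_4 h⟩
  | 6, 5, _ => ⟨0, gI_6_5 h⟩
  | 6, 6, _ => ⟨0, gI_6_6 h⟩

theorem mII (h : OriRel a b c d) :
    ∀ tc sc : Fin 7, ∀ g : Fin 2, tc ≠ 0 → ∃ ec tc' fc : Fin 7,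
      wrd a b c d (clw tc ++ clwLow sc ++ clw (gcl g)) =
        wrd a b c d (clwLow ec ++ clw tc' ++ clwLow fc)
  | 0, _, _, h0 => absurd rfl h0
  | 1, 0, 0, _ => ⟨0, 1, 0, gII_1_0_0 h⟩
  | 1, 0, 1, _ => ⟨0, 3, 0, gII_1_0_1 h⟩
  | 1, 1, 0, _ => ⟨0, 1, 0, gII_1_1_0 h⟩
  | 1, 1, 1, _ => ⟨0, 3, 1, gII_1_1_1 h⟩
  | 1, 2, 0, _ => ⟨0, 1, 2, gII_1_2_0 h⟩
  | 1, 2, 1, _ => ⟨2, 3, 0, gII_1_2_1 h⟩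
  | 1, 3, 0, _ => ⟨0, 1, 2, gII_1_3_0 h⟩
  | 1, 3, 1, _ => ⟨2, 3, 1, gII_1_3_1 h⟩
  | 1, 4, 0, _ => ⟨0, 1, 2, gII_1_4_0 h⟩
  | 1, 4, 1, _ => ⟨2, 3, 1, gII_1_4_1 h⟩
  | 1, 5, 0, _ => ⟨0, 1, 2, gII_1_5_0 h⟩
  | 1, 5, 1, _ => ⟨2, 3, 1, gII_1_5_1 h⟩
  | 1, 6, 0, _ => ⟨0, 1, 2, gII_1_6_0 h⟩
  | 1, 6, 1, _ => ⟨2, 3, 1, gII_1_6_1 h⟩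
  | 2, 0, 0, _ => ⟨0, 4, 0, gII_2_0_0 h⟩
  | 2, 0, 1, _ => ⟨0, 2, 0, gII_2_0_1 h⟩
  | 2, 1, 0, _ => ⟨1, 4, 0, gII_2_1_0 h⟩
  | 2, 1, 1, _ => ⟨0, 2, 1, gII_2_1_1 h⟩
  | 2, 2, 0, _ => ⟨0, 4, 2, gII_2_2_0 h⟩
  | 2, 2, 1, _ => ⟨0, 2, 0, gII_2_2_1 h⟩
  | 2, 3, 0, _ => ⟨1, 4, 2, gII_2_3_0 h⟩
  | 2, 3, 1, _ => ⟨0, 2, 1, gII_2_3_1 h⟩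
  | 2, 4, 0, _ => ⟨1, 4, 2, gII_2_4_0 h⟩
  | 2, 4, 1, _ => ⟨0, 2, 1, gII_2_4_1 h⟩
  | 2, 5, 0, _ => ⟨1, 4, 2, gII_2_5_0 h⟩
  | 2, 5, 1, _ => ⟨0, 2, 1, gII_2_5_1 h⟩
  | 2, 6, 0, _ => ⟨1, 4, 2, gII_2_6_0 h⟩
  | 2, 6, 1, _ => ⟨0, 2, 1, gII_2_6_1 h⟩
  | 3, 0, 0, _ => ⟨0, 5, 0, gII_3_0_0 h⟩
  | 3, 0, 1, _ => ⟨0, 3, 0, gII_3_0_1 h⟩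
  | 3, 1, 0, _ => ⟨0, 5, 0, gII_3_1_0 h⟩
  | 3, 1, 1, _ => ⟨0, 3, 1, gII_3_1_1 h⟩
  | 3, 2, 0, _ => ⟨0, 5, 2, gII_3_2_0 h⟩
  | 3, 2, 1, _ => ⟨0, 3, 0, gII_3_2_1 h⟩
  | 3, 3, 0, _ => ⟨0, 5, 2, gII_3_3_0 h⟩
  | 3, 3, 1, _ => ⟨0, 3, 1, gII_3_3_1 h⟩
  | 3, 4, 0, _ => ⟨0, 5, 2, gII_3_4_0 h⟩
  | 3, 4, 1, _ => ⟨0, 3, 1, gII_3_4_1 h⟩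
  | 3, 5, 0, _ => ⟨0, 5, 2, gII_3_5_0 h⟩
  | 3, 5, 1, _ => ⟨0, 3, 1, gII_3_5_1 h⟩
  | 3, 6, 0, _ => ⟨0, 5, 2, gII_3_6_0 h⟩
  | 3, 6, 1, _ => ⟨0, 3, 1, gII_3_6_1 h⟩
  | 4, 0, 0, _ => ⟨0, 4, 0, gII_4_0_0 h⟩
  | 4, 0, 1, _ => ⟨0, 6, 0, gII_4_0_1 h⟩
  | 4, 1, 0, _ => ⟨0, 4, 0, gII_4_1_0 h⟩
  | 4, 1, 1, _ => ⟨0, 6, 1, gII_4_1_1 h⟩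
  | 4, 2, 0, _ => ⟨0, 4, 2, gII_4_2_0 h⟩
  | 4, 2, 1, _ => ⟨0, 6, 0, gII_4_2_1 h⟩
  | 4, 3, 0, _ => ⟨0, 4, 2, gII_4_3_0 h⟩
  | 4, 3, 1, _ => ⟨0, 6, 1, gII_4_3_1 h⟩
  | 4, 4, 0, _ => ⟨0, 4, 2, gII_4_4_0 h⟩
  | 4, 4, 1, _ => ⟨0, 6, 1, gII_4_4_1 h⟩
  | 4, 5, 0, _ => ⟨0, 4, 2, gII_4_5_0 h⟩
  | 4, 5, 1, _ => ⟨0, 6, 1, gII_4_5_1 h⟩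
  | 4, 6, 0, _ => ⟨0, 4, 2, gII_4_6_0 h⟩
  | 4, 6, 1, _ => ⟨0, 6, 1, gII_4_6_1 h⟩
  | 5, 0, 0, _ => ⟨0, 5, 0, gII_5_0_0 h⟩
  | 5, 0, 1, _ => ⟨0, 3, 0, gII_5_0_1 h⟩
  | 5, 1, 0, _ => ⟨0, 5, 0, gII_5_1_0 h⟩
  | 5, 1, 1, _ => ⟨0, 3, 1, gII_5_1_1 h⟩
  | 5, 2, 0, _ => ⟨0, 5, 2, gII_5_2_0 h⟩
  | 5, 2, 1, _ => ⟨0, 3, 0, gII_5_2_1 h⟩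
  | 5, 3, 0, _ => ⟨0, 5, 2, gII_5_3_0 h⟩
  | 5, 3, 1, _ => ⟨0, 3, 1, gII_5_3_1 h⟩
  | 5, 4, 0, _ => ⟨0, 5, 2, gII_5_4_0 h⟩
  | 5, 4, 1, _ => ⟨0, 3, 1, gII_5_4_1 h⟩
  | 5, 5, 0, _ => ⟨0, 5, 2, gII_5_5_0 h⟩
  | 5, 5, 1, _ => ⟨0, 3, 1, gII_5_5_1 h⟩
  | 5, 6, 0, _ => ⟨0, 5, 2, gII_5_6_0 h⟩
  | 5, 6, 1, _ => ⟨0, 3, 1, gII_5_6_1 h⟩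
  | 6, 0, 0, _ => ⟨0, 4, 0, gII_6_0_0 h⟩
  | 6, 0, 1, _ => ⟨0, 6, 0, gII_6_0_1 h⟩
  | 6, 1, 0, _ => ⟨0, 4, 0, gII_6_1_0 h⟩
  | 6, 1, 1, _ => ⟨0, 6, 1, gII_6_1_1 h⟩
  | 6, 2, 0, _ => ⟨0, 4, 2, gII_6_2_0 h⟩
  | 6, 2, 1, _ => ⟨0, 6, 0, gII_6_2_1 h⟩
  | 6, 3, 0, _ => ⟨0, 4, 2, gII_6_3_0 h⟩
  | 6, 3, 1, _ => ⟨0, 6, 1, gII_6_3_1 h⟩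
  | 6, 4, 0, _ => ⟨0, 4, 2, gII_6_4_0 h⟩
  | 6, 4, 1, _ => ⟨0, 6, 1, gII_6_4_1 h⟩
  | 6, 5, 0, _ => ⟨0, 4, 2, gII_6_5_0 h⟩
  | 6, 5, 1, _ => ⟨0, 6, 1, gII_6_5_1 h⟩
  | 6, 6, 0, _ => ⟨0, 4, 2, gII_6_6_0 h⟩
  | 6, 6, 1, _ => ⟨0, 6, 1, gII_6_6_1 h⟩

end OriProof

namespace OriProof
open Origami
variable {n : ℕ}

/-- The submonoid of elements supported on indices `< k`. -/
def LowS (n k : ℕ) : Submonoid (O n) :=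
  Submonoid.closure {x | ∃ m, m < k ∧ (x = Aq n m ∨ x = Bq n m)}

theorem lowS_mono {k l : ℕ} (h : k ≤ l) : LowS n k ≤ LowS n l :=
  Submonoid.closure_mono (fun x ⟨m, hm, hx⟩ => ⟨m, lt_of_lt_of_le hm h, hx⟩)

theorem mem_A {m k : ℕ} (h : m < k) : Aq n m ∈ LowS n k :=
  Submonoid.subset_closure ⟨m, h, Or.inl rfl⟩

theorem mem_B {m k : ℕ} (h : m < k) : Bq n m ∈ LowS n k :=
  Submonoid.subset_closure ⟨m, h, Or.inr rfl⟩

theorem lowS_zero {x : O n} (h : x ∈ LowS n 0) : x = 1 := by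
  have : LowS n 0 ≤ ⊥ := by
    apply Submonoid.closure_le.2
    rintro y ⟨m, hm, _⟩; omega
  simpa using this h

/-- commutation between generators -/
theorem commAA {m m' : ℕ} (h : m' + 2 ≤ m) : Commute (Aq n m) (Aq n m') := by
  unfold Aq
  split_ifs with h1 h2 h2
  · exact e_intra true ⟨m, h1⟩ ⟨m', h2⟩ (Or.inr (by simpa using h))
  all_goals simp [Commute.one_right, Commute.one_left]

theorem commBB {m m' : ℕ} (h : m' + 2 ≤ m) : Commute (Bq n m) (Bq n m') := by
  unfold Bq
  split_ifs with h1 h2 h2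
  · exact e_intra false ⟨m, h1⟩ ⟨m', h2⟩ (Or.inr (by simpa using h))
  all_goals simp [Commute.one_right, Commute.one_left]

theorem commAB {m m' : ℕ} (h : m ≠ m') : Commute (Aq n m) (Bq n m') := by
  unfold Aq Bq
  split_ifs with h1 h2 h2
  · exact e_inter true ⟨m, h1⟩ ⟨m', h2⟩ (by simpa using h)
  all_goals simp [Commute.one_right, Commute.one_left]

theorem commBA {m m' : ℕ} (h : m ≠ m') : Commute (Bq n m) (Aq n m') := by
  unfold Aq Bq
  split_ifs with h1 h2 h2
  · exact e_inter false ⟨m, h1⟩ ⟨m', h2⟩ (by simpa using h)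
  all_goals simp [Commute.one_right, Commute.one_left]

theorem commute_A_low {k m : ℕ} (hk : k < m) {x : O n} (hx : x ∈ LowS n k) :
    Commute (Aq n m) x := by
  induction hx using Submonoid.closure_induction with
  | mem y hy =>
    obtain ⟨m', hm', (rfl | rfl)⟩ := hy
    · exact commAA (by omega)
    · exact commAB (by omega)
  | one => exact Commute.one_right _
  | mul y z _ _ hy hz => exact Commute.mul_right hy hz

theorem commute_B_low {k m : ℕ} (hk : k < m) {x : O n} (hx : x ∈ LowS n k) :
    Commute (Bq n m) x := by
  induction hx using Submonoid.closure_induction with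
  | mem y hy =>
    obtain ⟨m', hm', (rfl | rfl)⟩ := hy
    · exact commBA (by omega)
    · exact commBB (by omega)
  | one => exact Commute.one_right _
  | mul y z _ _ hy hz => exact Commute.mul_right hy hz

/-- cluster at index k with code tc -/
def clT (n k : ℕ) (tc : Fin 7) : O n := wrd (Aq n k) (Bq n k) 1 1 (clw tc)

theorem clT_zero (k : ℕ) : clT n k 0 = 1 := rfl

theorem clT_A (k : ℕ) : clT n k (gcl 0) = Aq n k := by simp [clT, clw, gcl, wrd, lett]

theorem clT_B (k : ℕ) : clT n k (gcl 1) = Bq n k := by simp [clT, clw, gcl, wrd, lett]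

theorem clT_mem {k K : ℕ} (h : k < K) (tc : Fin 7) : clT n k tc ∈ LowS n K := by
  have ha := mem_A (n := n) h
  have hb := mem_B (n := n) h
  fin_cases tc <;> simp [clT, clw, wrd, lett] <;>
    first
      | exact one_mem _
      | exact ha
      | exact hb
      | (repeat' apply mul_mem) <;> first | exact ha | exact hb | exact one_mem _

theorem commute_low_clT {k k' : ℕ} (hk : k' < k) {x : O n} (hx : x ∈ LowS n k')
    (tc : Fin 7) : Commute x (clT n k tc) :=
  commute_wrd (commute_A_low hk hx).symm (commute_B_low hk hx).symm
    (Commute.one_right x) (Commute.one_right x) (clw tc)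

end OriProof

namespace OriProof
open Origami
variable {n : ℕ}

theorem clT_illegal {k : ℕ} (h : ¬ k < n - 1) (tc : Fin 7) : clT n k tc = 1 := by
  have ha : Aq n k = 1 := dif_neg h
  have hb : Bq n k = 1 := dif_neg h
  fin_cases tc <;> simp [clT, clw, wrd, lett, ha, hb]

end OriProof

namespace OriProof
open Origami
variable {n : ℕ}

theorem OmTT (k : ℕ) (tc : Fin 7) : clT n k tc * clT n k tc = clT n k tc := by
  have e := mTT (oriTop_inst (n := n) k) 1 1 tc
  rw [wrd_append] at e
  exact e

theorem OmT (k : ℕ) (tc : Fin 7) (g : Fin 2) :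
    ∃ tc', clT n k tc * clT n k (gcl g) = clT n k tc' := by
  obtain ⟨tc', e⟩ := mT (oriTop_inst (n := n) k) 1 1 tc g
  rw [wrd_append] at e
  exact ⟨tc', e⟩

theorem OmI {k : ℕ} (hk1 : 1 ≤ k) (hk : k < n - 1) (tc sc : Fin 7) (htc : tc ≠ 0) :
    ∃ sg : Fin 7, clT n k tc * clT n (k-1) sc * clT n k tc
      = clT n k tc * clT n (k-1) sg := by
  obtain ⟨sg, e⟩ := mI (oriRel_inst k hk1 hk) tc sc htc
  refine ⟨sg, ?_⟩
  simp only [wrd_append, wrd_hi (Aq n k) (Bq n k) (Aq n (k-1)) (Bq n (k-1)) 1 1,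
    wrd_lo (Aq n k) (Bq n k) (Aq n (k-1)) (Bq n (k-1))] at e
  exact e

theorem OmII {k : ℕ} (hk1 : 1 ≤ k) (hk : k < n - 1) (tc sc : Fin 7) (g : Fin 2)
    (htc : tc ≠ 0) :
    ∃ ec tc' fc : Fin 7, clT n k tc * clT n (k-1) sc * clT n k (gcl g) =
      clT n (k-1) ec * clT n k tc' * clT n (k-1) fc := by
  obtain ⟨ec, tc', fc, e⟩ := mII (oriRel_inst k hk1 hk) tc sc g htc
  refine ⟨ec, tc', fc, ?_⟩
  simp only [wrd_append, wrd_hi (Aq n k) (Bq n k) (Aq n (k-1)) (Bq n (k-1)) 1 1,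
    wrd_lo (Aq n k) (Bq n k) (Aq n (k-1)) (Bq n (k-1))] at e
  exact e

end OriProof

namespace OriProof
open Origami
variable {n : ℕ}



/-- shuffle helper -/
theorem shuffle {p T c S d A E T' F : O n}
    (h1 : T * c = c * T) (h2 : d * A = A * d) (h3 : T * S * A = E * T' * F) :
    p * T * (c * S * d) * A = p * c * E * T' * (F * d) := by
  calc p * T * (c * S * d) * A
      = p * (T * c) * (S * (d * A)) := by simp only [mul_assoc]
    _ = p * (c * T) * (S * (A * d)) := by rw [h1, h2]
    _ = (p * c) * (T * S * A) * d := by simp only [mul_assoc]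
    _ = (p * c) * (E * T' * F) * d := by rw [h3]
    _ = p * c * E * T' * (F * d) := by simp only [mul_assoc]

def ClForm (n k : ℕ) (w : O n) : Prop :=
  ∃ p tc q, p ∈ LowS n k ∧ q ∈ LowS n k ∧ w = p * clT n k tc * q

theorem clForm_one (k : ℕ) : ClForm n k 1 :=
  ⟨1, 0, 1, one_mem _, one_mem _, by simp [clT_zero]⟩

theorem clusterLemma : ∀ k, ∀ w ∈ LowS n (k+1), ClForm n k w := by
  intro k
  induction k using Nat.strong_induction_on with
  | _ k IH =>
    intro w hw
    have main : ∀ w ∈ LowS n (k+1), ∀ z, ClForm n k z → ClForm n k (z * w) := by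
      intro w hw
      induction hw using Submonoid.closure_induction with
      | one => intro z hz; simpa using hz
      | mul x y hx hy hx' hy' =>
        intro z hz
        rw [← mul_assoc]
        exact hy' _ (hx' _ hz)
      | mem x hx =>
        obtain ⟨m, hm, hx⟩ := hx
        -- reduce both colors to a single treatment via a generator-code
        intro z hz
        obtain ⟨p, tc, q, hp, hq, rfl⟩ := hz
        -- if the generator is trivial
        by_cases hleg : m < n - 1
        · rcases Nat.lt_succ_iff_lt_or_eq.1 hm with hmk | rfl
          · -- m < k : absorb into q
            have hgen : x ∈ LowS n k := by
              rcases hx with rfl | rfl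
              · exact mem_A hmk
              · exact mem_B hmk
            exact ⟨p, tc, q * x, hp, mul_mem hq hgen, by simp [mul_assoc]⟩
          · -- m = k : the interesting case
            -- write x = clT n k (gcl g)
            obtain ⟨g, rfl⟩ : ∃ g : Fin 2, x = clT n m (gcl g) := by
              rcases hx with rfl | rfl
              · exact ⟨0, (clT_A m).symm⟩
              · exact ⟨1, (clT_B m).symm⟩
            rcases Nat.eq_zero_or_pos m with rfl | hm1
            · -- k = 0 : q = 1
              have hq1 : q = 1 := lowS_zero hq
              obtain ⟨tc', e⟩ := OmT 0 tc g
              exact ⟨p, tc', 1, hp, one_mem _, by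
                rw [hq1, mul_one, mul_one, mul_assoc, ← e]⟩
            · -- k ≥ 1
              by_cases htc : tc = 0
              · -- T = 1 : trivial re-clustering
                subst htc
                obtain ⟨c, sc, d, hc, hd, rfl⟩ := IH (m-1) (by omega) q
                  (by rw [show m - 1 + 1 = m by omega]; exact hq)
                have hdx : d * clT n m (gcl g) = clT n m (gcl g) * d := by
                  exact (commute_low_clT (show m-1 < m by omega) hd (gcl g)).eq
                refine ⟨p * (c * clT n (m-1) sc), gcl g, d,
                  mul_mem hp (mul_mem (lowS_mono (by omega) hc) (clT_mem (by omega) sc)),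
                  lowS_mono (by omega) hd, ?_⟩
                rw [clT_zero, mul_one]
                calc p * (c * clT n (m-1) sc * d) * clT n m (gcl g)
                    = p * (c * clT n (m-1) sc) * (d * clT n m (gcl g)) := by
                      simp only [mul_assoc]
                  _ = p * (c * clT n (m-1) sc) * (clT n m (gcl g) * d) := by rw [hdx]
                  _ = p * (c * clT n (m-1) sc) * clT n m (gcl g) * d := by
                      simp only [mul_assoc]
              · -- T ≠ 1 : use the master identity II
                obtain ⟨c, sc, d, hc, hd, rfl⟩ := IH (m-1) (by omega) q
                  (by rw [show m - 1 + 1 = m by omega]; exact hq)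
                obtain ⟨ec, tc', fc, e⟩ := OmII hm1 hleg tc sc g htc
                have h1 : clT n m tc * c = c * clT n m tc :=
                  (commute_low_clT (show m-1 < m by omega) hc tc).symm.eq
                have h2 : d * clT n m (gcl g) = clT n m (gcl g) * d :=
                  (commute_low_clT (show m-1 < m by omega) hd (gcl g)).eq
                refine ⟨p * c * clT n (m-1) ec, tc', clT n (m-1) fc * d,
                  mul_mem (mul_mem hp (lowS_mono (by omega) hc))
                    (clT_mem (by omega) ec),
                  mul_mem (clT_mem (by omega) fc) (lowS_mono (by omega) hd), ?_⟩
                exact shuffle h1 h2 e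
        · -- illegal index : x = 1
          have hx1 : x = 1 := by
            rcases hx with rfl | rfl
            · exact dif_neg hleg
            · exact dif_neg hleg
          exact ⟨p, tc, q, hp, hq, by rw [hx1, mul_one]⟩
    simpa using main w hw 1 (clForm_one k)

end OriProof

namespace OriProof
open Origami
variable {n : ℕ}

/-- aperiodicity property of an element -/
def Ap (w : O n) : Prop := ∃ m : ℕ, 1 ≤ m ∧ w ^ m = w ^ (m - 1)

theorem ap_congr {w w' : O n} (h : w = w') (hw : Ap w) : Ap w' := h ▸ hw

theorem apLow : ∀ k, ∀ w ∈ LowS n k, Ap w := by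
  intro k
  induction k using Nat.strong_induction_on with
  | _ k IH =>
    intro w hw
    rcases Nat.eq_zero_or_pos k with rfl | hk1
    · rw [lowS_zero hw]
      exact ⟨1, le_refl 1, by simp⟩
    obtain ⟨p, tc, q, hp, hq, hw'⟩ := clusterLemma (k-1) w
      (by rw [show k - 1 + 1 = k by omega]; exact hw)
    by_cases htc : tc = 0
    · subst htc
      refine ap_congr ?_ (IH (k-1) (by omega) (p*q) (mul_mem hp hq))
      rw [hw', clT_zero, mul_one]
    by_cases hleg : k - 1 < n - 1
    · rcases Nat.eq_zero_or_pos (k-1) with hk0 | hk2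
      · -- top index is 0 : w is just an idempotent cluster
        have hp1 : p = 1 := lowS_zero (hk0 ▸ hp)
        have hq1 : q = 1 := lowS_zero (hk0 ▸ hq)
        refine ⟨2, by omega, ?_⟩
        rw [hw', hp1, hq1, one_mul, mul_one, pow_two, pow_one]
        exact OmTT (k-1) tc
      · -- main case
        obtain ⟨c, sc, d, hc, hdd, htq⟩ := clusterLemma (k-1-1) (q * p)
          (by rw [show k-1-1+1 = k-1 by omega]; exact mul_mem hq hp)
        obtain ⟨sg, hI⟩ := OmI hk2 hleg tc sc htc
        set T := clT n (k-1) tc with hT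
        set S := clT n (k-1-1) sc with hS
        set σ := clT n (k-1-1) sg with hσ
        set t := q * p with ht
        set ρ := c * σ * d with hρ
        have hρmem : ρ ∈ LowS n (k-1) :=
          mul_mem (mul_mem (lowS_mono (by omega) hc) (clT_mem (by omega) sg))
            (lowS_mono (by omega) hdd)
        have hTc : T * c = c * T := (commute_low_clT (by omega) hc tc).symm.eq
        have hTd : d * T = T * d := (commute_low_clT (by omega) hdd tc).eq
        have key : T * t * T = T * ρ := by
          rw [htq]
          calc T * (c * S * d) * T
              = (T * c) * S * (d * T) := by simp only [mul_assoc]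
            _ = (c * T) * S * (T * d) := by rw [hTc, hTd]
            _ = c * (T * S * T) * d := by simp only [mul_assoc]
            _ = c * (T * σ) * d := by rw [hI]
            _ = (c * T) * σ * d := by simp only [mul_assoc]
            _ = (T * c) * σ * d := by rw [hTc]
            _ = T * ρ := by rw [hρ]; simp only [mul_assoc]
        have tel : ∀ j, (T * t)^(j+1) = T * ρ^j * t := by
          intro j
          induction j with
          | zero => simp
          | succ j ih =>
            calc (T*t)^(j+1+1) = (T*t) * (T*t)^(j+1) := pow_succ' (T*t) (j+1)
              _ = (T*t) * (T * ρ^j * t) := by rw [ih]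
              _ = (T*t*T) * ρ^j * t := by simp only [mul_assoc]
              _ = (T*ρ) * ρ^j * t := by rw [key]
              _ = T * (ρ * ρ^j) * t := by simp only [mul_assoc]
              _ = T * ρ^(j+1) * t := by rw [← pow_succ']
        obtain ⟨m, hm, hρap⟩ := IH (k-1) (by omega) ρ hρmem
        have hx : (T*t)^(m+1) = (T*t)^m := by
          have h2 := tel (m-1)
          rw [show m - 1 + 1 = m by omega] at h2
          rw [tel m, h2, hρap]
        have hTqp : (T*q) * (p * T * q) = (T*t) * (T*q) := by
          rw [ht]; simp only [mul_assoc]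
        have wpow : ∀ j, w^(j+1) = p * (T*t)^j * (T * q) := by
          intro j
          induction j with
          | zero => rw [pow_one, pow_zero, mul_one, hw']; simp only [mul_assoc]
          | succ j ih =>
            calc w^(j+1+1) = w^(j+1) * w := pow_succ w (j+1)
              _ = (p * (T*t)^j * (T*q)) * (p * T * q) := by rw [ih, hw']
              _ = (p * (T*t)^j) * ((T*q) * (p * T * q)) := by simp only [mul_assoc]
              _ = (p * (T*t)^j) * ((T*t) * (T*q)) := by rw [hTqp]
              _ = p * ((T*t)^j * (T*t)) * (T*q) := by simp only [mul_assoc]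
              _ = p * (T*t)^(j+1) * (T*q) := by rw [← pow_succ]
        refine ⟨m+2, by omega, ?_⟩
        have e1 := wpow (m+1)
        have e2 := wpow m
        rw [show m+2-1 = m+1 by omega, show m+2 = m+1+1 by omega, e1, e2, hx]
    · -- illegal cluster index
      refine ap_congr ?_ (IH (k-1) (by omega) (p*q) (mul_mem hp hq))
      rw [hw', clT_illegal hleg, mul_one]

/-- every element lies in `LowS n n` -/
theorem mem_lowS_top (w : O n) : w ∈ LowS n n := by
  induction w using Con.induction_on with
  | H u =>
    induction u using FreeMonoid.inductionOn with
    | one => exact one_mem _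
    | mul x y ihx ihy =>
      rw [Con.coe_mul]
      exact mul_mem ihx ihy
    | of g =>
      obtain ⟨t, i⟩ := g
      show (gen t i) ∈ LowS n n
      have hi : (i : ℕ) < n - 1 := i.isLt
      rcases t with _ | _
      · have : gen false i = Bq n i := by
          rw [Bq, dif_pos hi]
        rw [this]
        exact mem_B (by omega)
      · have : gen true i = Aq n i := by
          rw [Aq, dif_pos hi]
        rw [this]
        exact mem_A (by omega)

theorem ap_all (w : O n) : ∃ m : ℕ, 1 ≤ m ∧ w ^ m = w ^ (m - 1) :=
  apLow n w (mem_lowS_top w)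

end OriProof

namespace OriProof

theorem h_trivial {Mo : Type*} [Monoid Mo]
    (hap : ∀ w : Mo, ∃ m : ℕ, 1 ≤ m ∧ w ^ m = w ^ (m-1))
    (a b : Mo)
    (hL : Set.range (fun x : Mo => x * a) = Set.range (fun x : Mo => x * b))
    (hR : Set.range (fun x : Mo => a * x) = Set.range (fun x : Mo => b * x)) :
    a = b := by
  obtain ⟨u, hu⟩ : ∃ u, u * b = a := by
    have : a ∈ Set.range (fun x : Mo => x * b) := by
      rw [← hL]; exact ⟨1, one_mul a⟩
    exact this
  obtain ⟨t, htt⟩ : ∃ t, a * t = b := by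
    have : b ∈ Set.range (fun x : Mo => a * x) := by
      rw [hR]; exact ⟨1, mul_one b⟩
    exact this
  have step : ∀ j, a = u^j * a * t^j := by
    intro j; induction j with
    | zero => simp
    | succ j ih =>
      calc a = u * b := hu.symm
        _ = u * (a * t) := by rw [htt]
        _ = u * ((u^j * a * t^j) * t) := by rw [← ih]
        _ = (u * u^j) * a * (t^j * t) := by simp only [mul_assoc]
        _ = u^(j+1) * a * t^(j+1) := by rw [← pow_succ' u j, ← pow_succ t j]
  obtain ⟨m, hm, hum⟩ := hap u
  have h1 := step m
  rw [hum] at h1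
  have h2 := step (m-1)
  have hts : t^m = t^(m-1) * t := by
    rw [← pow_succ]; congr 1; omega
  have hat : a = a * t := by
    calc a = u^(m-1) * a * t^m := h1
      _ = u^(m-1) * a * (t^(m-1) * t) := by rw [hts]
      _ = (u^(m-1) * a * t^(m-1)) * t := by simp only [mul_assoc]
      _ = a * t := by rw [← h2]
  exact hat.trans htt

end OriProof


open Origami in
/-- `O_n` is aperiodic: every `w` satisfies `w ^ m = w ^ (m-1)` for some `m ≥ 1`;
consequently `O_n` is `H`-trivial. -/
theorem origami_aperiodic_H_trivial (n : ℕ) :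
    (∀ w : O n, ∃ m : ℕ, 1 ≤ m ∧ w ^ m = w ^ (m - 1)) ∧
    (∀ a b : O n, GreenL a b → GreenR a b → a = b) :=
  ⟨OriProof.ap_all, fun a b hL hR => OriProof.h_trivial OriProof.ap_all a b hL hR⟩
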